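/- arXiv:2603.08570 — 10 statements merged into one kernel-verified Lean document; each statement's English description precedes it below -/
import Mathlib

section
/- Let n ≥ 1 and a_1,…,a_n ∈ ℝ with a_i ≠ 0 for every i. Let S := {s ∈ {−1,+1}^n : ∏_{i=1}^n s_i = +1} and L_s := Σ_{i=1}^n s_i a_i. Suppose ∏_{i=1}^n sign(a_i) = −1, where sign(a_i) = +1 if a_i > 0 and −1 if a_i < 0. Then max_{s∈S} L_s = Σ_{i=1}^n |a_i| − 2 min_{1≤i≤n} |a_i|, and the number of maximizers #{s ∈ S : L_s = max_{s'∈S} L_{s'}} equals #{j : |a_j| = min_{1≤i≤n} |a_i|}. -/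
open Finset
open scoped Classical

/-- Sign vector associated to a Boolean vector: `true ↦ +1`, `false ↦ -1`. -/
noncomputable def signVec {n : ℕ} (s : Fin n → Bool) : Fin n → ℝ :=
  fun i => if s i then 1 else -1

/-- The admissible sign patterns: sign vectors whose product of coordinates is `+1`. -/
noncomputable def admissible (n : ℕ) : Finset (Fin n → Bool) :=
  Finset.univ.filter (fun s => ∏ i, signVec s i = 1)

/-!
Let `t` be the sign pattern of `a`, so that `L_t = Σ |a_i|` but `t ∉ S`. Writing `D` for the set
of coordinates where `s` differs from `t`, we get `L_s = Σ |a_i| - 2 Σ_{i ∈ D} |a_i|`, and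
`s ∈ S` exactly when `#D` is odd. Since every `|a_i|` is at least `m > 0`, the sum over a
nonempty `D` is at least `m`, with equality only when `D` is a single index where `|a_i| = m`.
So the maximizers are the patterns obtained from `t` by flipping one minimal coordinate.
-/

section Disagreements

variable {ι : Type*} [Fintype ι]

def disagreements (s t : ι → Bool) : Finset ι :=
  univ.filter fun i => s i ≠ t i

lemma mem_disagreements {s t : ι → Bool} {i : ι} : i ∈ disagreements s t ↔ s i ≠ t i := by
  simp [disagreements]

variable [DecidableEq ι]

lemma disagreements_update_not (t : ι → Bool) (j : ι) :
    disagreements (Function.update t j (!t j)) t = {j} := by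
  ext i
  rcases eq_or_ne i j with rfl | hij
  · simp [mem_disagreements]
  · simp [mem_disagreements, hij]

lemma eq_update_not_of_disagreements_eq_singleton {s t : ι → Bool} {j : ι}
    (h : disagreements s t = {j}) : s = Function.update t j (!t j) := by
  funext i
  have hi : s i ≠ t i ↔ i = j := by rw [← mem_disagreements, h, mem_singleton]
  rcases eq_or_ne i j with rfl | hij
  · simpa [Bool.eq_not_iff] using hi
  · simpa [Function.update_of_ne hij, hij] using hi

lemma update_not_injective (t : ι → Bool) :
    Function.Injective fun j => Function.update t j (!t j) := fun j k h => by
  simpa [disagreements_update_not] using congrArg (disagreements · t) h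

end Disagreements

section Weights

variable {ι : Type*} {f : ι → ℝ} {m : ℝ} {D : Finset ι}

lemma le_sum_of_nonempty (hm : 0 ≤ m) (hf : ∀ i ∈ D, m ≤ f i) (hD : D.Nonempty) :
    m ≤ ∑ i ∈ D, f i := by
  calc m ≤ #D * m := le_mul_of_one_le_left hm (Nat.one_le_cast.2 hD.card_pos)
    _ = #D • m := (nsmul_eq_mul _ _).symm
    _ ≤ ∑ i ∈ D, f i := D.card_nsmul_le_sum f m hf

lemma exists_eq_singleton_of_sum_le (hm : 0 < m) (hf : ∀ i ∈ D, m ≤ f i) (hD : D.Nonempty)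
    (hsum : ∑ i ∈ D, f i ≤ m) : ∃ j, D = {j} ∧ f j = m := by
  have hcard : (#D : ℝ) * m ≤ 1 * m := by
    rw [← nsmul_eq_mul, one_mul]
    exact (D.card_nsmul_le_sum f m hf).trans hsum
  have hcard_le : #D ≤ 1 := by exact_mod_cast le_of_mul_le_mul_right hcard hm
  obtain ⟨j, rfl⟩ := card_eq_one.1 (le_antisymm hcard_le hD.card_pos)
  exact ⟨j, rfl, le_antisymm (by simpa using hsum) (hf j (mem_singleton_self j))⟩

end Weights

section SignVectors

variable {n : ℕ}

lemma signVec_eq_ite_mul (s t : Fin n → Bool) (i : Fin n) :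
    signVec s i = (if s i ≠ t i then -1 else 1) * signVec t i := by
  cases hs : s i <;> cases ht : t i <;> simp [signVec, hs, ht]

lemma prod_signVec_eq (s t : Fin n → Bool) :
    ∏ i, signVec s i = (-1) ^ #(disagreements s t) * ∏ i, signVec t i := by
  rw [Fintype.prod_congr _ _ (signVec_eq_ite_mul s t), prod_mul_distrib, disagreements,
    ← prod_filter, prod_const]

lemma mem_admissible_iff_odd {s t : Fin n → Bool} (ht : ∏ i, signVec t i = -1) :
    s ∈ admissible n ↔ Odd #(disagreements s t) := by
  rw [admissible, mem_filter, prod_signVec_eq s t, ht, mul_neg_one, neg_eq_iff_eq_neg,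
    neg_one_pow_eq_neg_one_iff_odd (by norm_num)]
  simp

noncomputable def signPattern (a : Fin n → ℝ) : Fin n → Bool :=
  fun i => decide (0 < a i)

lemma signVec_signPattern (a : Fin n → ℝ) (i : Fin n) :
    signVec (signPattern a) i = if 0 < a i then 1 else -1 := by
  simp [signVec, signPattern]

lemma signVec_signPattern_mul (a : Fin n → ℝ) (i : Fin n) :
    signVec (signPattern a) i * a i = |a i| := by
  rw [signVec_signPattern]
  split_ifs with h
  · rw [one_mul, abs_of_pos h]
  · rw [neg_one_mul, abs_of_nonpos (not_lt.1 h)]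

lemma sum_signVec_mul (s : Fin n → Bool) (a : Fin n → ℝ) :
    ∑ i, signVec s i * a i =
      ∑ i, |a i| - 2 * ∑ i ∈ disagreements s (signPattern a), |a i| := by
  have hterm (i : Fin n) : signVec s i * a i =
      |a i| - 2 * if s i ≠ signPattern a i then |a i| else 0 := by
    rw [signVec_eq_ite_mul s (signPattern a), mul_assoc, signVec_signPattern_mul]
    split_ifs <;> ring
  rw [Fintype.sum_congr _ _ hterm, sum_sub_distrib, ← mul_sum, disagreements, sum_filter]

end SignVectors

section MaxSignedSum

variable {n : ℕ} {a : Fin n → ℝ} {m : ℝ}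

lemma sum_signVec_mul_le (hm : 0 ≤ m) (hma : ∀ i, m ≤ |a i|)
    (ht : ∏ i, signVec (signPattern a) i = -1) {s : Fin n → Bool} (hs : s ∈ admissible n) :
    ∑ i, signVec s i * a i ≤ ∑ i, |a i| - 2 * m := by
  have hodd := (mem_admissible_iff_odd ht).1 hs
  have := le_sum_of_nonempty hm (fun i _ => hma i) (card_pos.1 hodd.pos)
  rw [sum_signVec_mul]
  linarith

lemma filter_admissible_sum_signVec_mul_eq (hm : 0 < m) (hma : ∀ i, m ≤ |a i|)
    (ht : ∏ i, signVec (signPattern a) i = -1) :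
    (admissible n).filter (fun s => ∑ i, signVec s i * a i = ∑ i, |a i| - 2 * m) =
      (univ.filter fun j => |a j| = m).image
        fun j => Function.update (signPattern a) j (!signPattern a j) := by
  ext s
  simp only [mem_filter, mem_image, mem_univ, true_and, mem_admissible_iff_odd ht,
    sum_signVec_mul]
  constructor
  · rintro ⟨hodd, hval⟩
    obtain ⟨j, hD, hj⟩ := exists_eq_singleton_of_sum_le hm (fun i _ => hma i)
      (card_pos.1 hodd.pos) (by linarith)
    exact ⟨j, hj, (eq_update_not_of_disagreements_eq_singleton hD).symm⟩
  · rintro ⟨j, hj, rfl⟩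
    simp [disagreements_update_not, hj]

end MaxSignedSum

theorem max_signed_sum_negative_sign_product_general (n : ℕ) (a : Fin n → ℝ)
    (ha : ∀ i, a i ≠ 0)
    (hsign : ∏ i, (if 0 < a i then (1 : ℝ) else -1) = -1)
    (m : ℝ) (hm : IsLeast (Set.range fun i => |a i|) m) :
    IsGreatest ((admissible n).image (fun s => ∑ i, signVec s i * a i) : Set ℝ)
      (∑ i, |a i| - 2 * m)
    ∧ ((admissible n).filter
          (fun s => ∑ i, signVec s i * a i = ∑ i, |a i| - 2 * m)).card
        = (Finset.univ.filter (fun j => |a j| = m)).card := by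
  have ht : ∏ i, signVec (signPattern a) i = -1 := by simpa only [signVec_signPattern]
  obtain ⟨j, hj⟩ := hm.1
  have hm0 : 0 < m := hj ▸ abs_pos.2 (ha j)
  have hma : ∀ i, m ≤ |a i| := fun i => hm.2 ⟨i, rfl⟩
  have hmax := filter_admissible_sum_signVec_mul_eq hm0 hma ht
  rw [coe_image]
  refine ⟨⟨?_, ?_⟩, ?_⟩
  · have hflip : Function.update (signPattern a) j (!signPattern a j) ∈ (admissible n).filter
        (fun s => ∑ i, signVec s i * a i = ∑ i, |a i| - 2 * m) :=
      hmax ▸ mem_image_of_mem _ (mem_filter.2 ⟨mem_univ j, hj⟩)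
    exact ⟨_, mem_filter.1 hflip⟩
  · rintro _ ⟨s, hs, rfl⟩
    exact sum_signVec_mul_le hm0.le hma ht hs
  · rw [hmax, card_image_of_injective _ (update_not_injective _)]

/-- If all `a_i ≠ 0` and the product of their signs is `-1`, then
`max_{s ∈ S} L_s = Σ |a_i| - 2 min_i |a_i|`, and the number of maximizers equals the number
of indices attaining `min_i |a_i|`. -/
theorem max_signed_sum_negative_sign_product (n : ℕ) (hn : 1 ≤ n) (a : Fin n → ℝ)
    (ha : ∀ i, a i ≠ 0)
    (hsign : ∏ i, (if 0 < a i then (1 : ℝ) else -1) = -1)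
    (m : ℝ) (hm : IsLeast (Set.range fun i => |a i|) m) :
    IsGreatest ((admissible n).image (fun s => ∑ i, signVec s i * a i) : Set ℝ)
      (∑ i, |a i| - 2 * m)
    ∧ ((admissible n).filter
          (fun s => ∑ i, signVec s i * a i = ∑ i, |a i| - 2 * m)).card
        = (Finset.univ.filter (fun j => |a j| = m)).card :=
  max_signed_sum_negative_sign_product_general n a ha hsign m hm
end

section
/- Let −∞ < a < b ≤ ∞ and let h, φ : (a, b) → ℝ, with I(λ) := ∫_a^b φ(x) e^{−λ h(x)} dx. Assume: (i) h(x) > h(a⁺) := lim_{x→a⁺} h(x) =: h_a for all x ∈ (a,b), and for every δ > 0, inf_{x ∈ [a+δ, b)} (h(x) − h_a) > 0; (ii) h is differentiable and φ is continuous on a right neighborhood of a; (iii) there exist real constants μ > 0, α > 0, a_0 > 0, b_0 ≠ 0 such that, as x → a⁺, h(x) − h_a = a_0 (x−a)^μ (1 + o(1)), φ(x) = b_0 (x−a)^{α−1} (1 + o(1)), and h'(x) = μ a_0 (x−a)^{μ−1} (1 + o(1)); (iv) ∫_a^b |φ(x)| e^{−λ h(x)} dx < ∞ for all sufficiently large λ.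 Then, as λ → ∞, λ^{α/μ} e^{λ h_a} I(λ) → Γ(α/μ) · b_0 / (μ a_0^{α/μ}). -/
/-!
Subtract `h_a` from the exponent and split the integral at a point `e` close to `a`. On `[e, b)`
the exponent is at least some `c > 0`, so that part is `O(λ^{α/μ} e^{-λ c}) → 0`. On `(a, e)`
the substitution `x = a + λ^{-1/μ} s` turns `λ^{α/μ} ∫` into `∫ F_λ(s) ds`, where
`F_λ(s) → b₀ s^{α-1} e^{-a₀ s^μ}` pointwise and `|F_λ(s)| ≤ B s^{α-1} e^{-a₀ s^μ / 2}`;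
dominated convergence and `∫₀^∞ s^{α-1} e^{-a₀ s^μ} ds = Γ(α/μ) / (μ a₀^{α/μ})` give the limit.
-/

open MeasureTheory Filter
open scoped Topology

open Real Set

theorem tendsto_div_of_tendsto_div_const_mul {α : Type*} {l : Filter α} {f g : α → ℝ} {c : ℝ}
    (hc : c ≠ 0) (h : Tendsto (fun x => f x / (c * g x)) l (𝓝 1)) :
    Tendsto (fun x => f x / g x) l (𝓝 c) := by
  simpa [mul_div_assoc', mul_div_mul_left _ _ hc] using h.const_mul c

theorem integral_Ioi_rpow_sub_one_mul_exp_neg_mul_rpow {α μ Q : ℝ} (hα : 0 < α) (hμ : 0 < μ)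
    (hQ : 0 < Q) :
    ∫ s in Ioi (0 : ℝ), s ^ (α - 1) * exp (-Q * s ^ μ) = Gamma (α / μ) / (μ * Q ^ (α / μ)) := by
  rw [integral_rpow_mul_exp_neg_mul_rpow hμ (by linarith) hQ, sub_add_cancel, neg_div,
    rpow_neg hQ.le]
  field_simp

section Tail

variable {X : Type*} [MeasurableSpace X] {μ : Measure X} {f H : X → ℝ} {c l₀ : ℝ}

theorem abs_integral_mul_exp_neg_mul_le (hc : ∀ᵐ x ∂μ, c ≤ H x)
    (hint : Integrable (fun x => f x * exp (-(l₀ * H x))) μ) {l : ℝ} (hl : l₀ ≤ l) :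
    |∫ x, f x * exp (-(l * H x)) ∂μ| ≤
      exp (-((l - l₀) * c)) * ∫ x, |f x * exp (-(l₀ * H x))| ∂μ := by
  rw [← Real.norm_eq_abs, ← integral_const_mul]
  refine norm_integral_le_of_norm_le (hint.abs.const_mul _) ?_
  filter_upwards [hc] with x hx
  have hsplit : exp (-(l * H x)) = exp (-(l₀ * H x)) * exp (-((l - l₀) * H x)) := by
    rw [← exp_add]; ring_nf
  have hdecay : exp (-((l - l₀) * H x)) ≤ exp (-((l - l₀) * c)) := by gcongr
  rw [Real.norm_eq_abs, hsplit, ← mul_assoc, abs_mul _ (exp _), abs_exp, mul_comm]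
  gcongr

theorem tendsto_rpow_mul_integral_mul_exp_neg_mul_of_ae_le (p : ℝ) (hc₀ : 0 < c)
    (hc : ∀ᵐ x ∂μ, c ≤ H x) (hint : Integrable (fun x => f x * exp (-(l₀ * H x))) μ) :
    Tendsto (fun l => l ^ p * ∫ x, f x * exp (-(l * H x)) ∂μ) atTop (𝓝 0) := by
  set K := ∫ x, |f x * exp (-(l₀ * H x))| ∂μ
  have hmajor : Tendsto (fun l : ℝ => K * exp (l₀ * c) * (l ^ p * exp (-c * l))) atTop (𝓝 0) := by
    simpa using (tendsto_rpow_mul_exp_neg_mul_atTop_nhds_zero p c hc₀).const_mul (K * exp (l₀ * c))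
  refine squeeze_zero_norm' ?_ hmajor
  filter_upwards [eventually_ge_atTop (max l₀ 0)] with l hl
  have hl₀ : l₀ ≤ l := le_of_max_le_left hl
  have hl0 : 0 ≤ l := le_of_max_le_right hl
  calc ‖l ^ p * ∫ x, f x * exp (-(l * H x)) ∂μ‖
      ≤ l ^ p * (exp (-((l - l₀) * c)) * K) := by
        rw [norm_mul, Real.norm_of_nonneg (rpow_nonneg hl0 p)]
        exact mul_le_mul_of_nonneg_left (abs_integral_mul_exp_neg_mul_le hc hint hl₀)
          (rpow_nonneg hl0 p)
    _ = K * exp (l₀ * c) * (l ^ p * exp (-c * l)) := by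
        rw [show -((l - l₀) * c) = l₀ * c + -c * l by ring, exp_add]; ring

end Tail

theorem rpow_div_mul_rpow_neg_inv_mul {l : ℝ} (hl : 0 < l) {s : ℝ} (hs : 0 ≤ s) (q μ : ℝ) :
    l ^ (q / μ) * (l ^ (-μ⁻¹) * s) ^ q = s ^ q := by
  rw [mul_rpow (rpow_nonneg hl.le _) hs, ← rpow_mul hl.le, ← mul_assoc, ← rpow_add hl,
    show q / μ + -μ⁻¹ * q = 0 by ring, rpow_zero, one_mul]

theorem rpow_mul_mul_exp_neg_mul_eq {l s μ : ℝ} (hl : 0 < l) (hs : 0 < s) (hμ : μ ≠ 0)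
    (α y z : ℝ) :
    l ^ ((α - 1) / μ) * (y * exp (-(l * z))) =
      y / (l ^ (-μ⁻¹) * s) ^ (α - 1) * s ^ (α - 1) *
        exp (-(z / (l ^ (-μ⁻¹) * s) ^ μ) * s ^ μ) := by
  have ht : 0 < l ^ (-μ⁻¹) * s := mul_pos (rpow_pos_of_pos hl _) hs
  have hscale : l * (l ^ (-μ⁻¹) * s) ^ μ = s ^ μ := by
    simpa [div_self hμ] using rpow_div_mul_rpow_neg_inv_mul hl hs.le μ μ
  rw [← rpow_div_mul_rpow_neg_inv_mul hl hs.le (α - 1) μ, ← hscale]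
  field_simp [(rpow_pos_of_pos ht (α - 1)).ne', (rpow_pos_of_pos ht μ).ne']

theorem tendsto_add_rpow_neg_inv_mul_nhdsGT {μ s : ℝ} (hμ : 0 < μ) (hs : 0 < s) (a : ℝ) :
    Tendsto (fun l : ℝ => a + l ^ (-μ⁻¹) * s) atTop (𝓝[>] a) := by
  refine tendsto_nhdsWithin_iff.2 ⟨?_, ?_⟩
  · simpa using ((tendsto_rpow_neg_atTop (inv_pos.2 hμ)).mul_const s).const_add a
  · filter_upwards [eventually_gt_atTop 0] with l hl
    exact lt_add_of_pos_right a (mul_pos (rpow_pos_of_pos hl _) hs)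

theorem integral_comp_add_mul_left {E : Type*} [NormedAddCommGroup E] [NormedSpace ℝ E]
    (g : ℝ → E) (a c : ℝ) : ∫ s, g (a + c * s) = |c⁻¹| • ∫ x, g x := by
  rw [Measure.integral_comp_mul_left (fun y => g (a + y)) c, integral_add_left_eq_self]

theorem MeasureTheory.AEStronglyMeasurable.comp_add_mul_left {E : Type*} [TopologicalSpace E]
    {g : ℝ → E} (hg : AEStronglyMeasurable g volume) (a : ℝ) {c : ℝ} (hc : c ≠ 0) :
    AEStronglyMeasurable (fun s => g (a + c * s)) volume :=
  hg.comp_quasiMeasurePreserving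
    ((measurePreserving_add_left volume a).quasiMeasurePreserving.comp
      (Measure.quasiMeasurePreserving_smul volume hc))

/-- The integrand of `l ^ (α / μ) * ∫ x in Ioo a e, f x * exp (-(l * H x))` after the
substitution `x = a + l ^ (-μ⁻¹) * s`. -/
noncomputable def laplaceRescaled (f H : ℝ → ℝ) (a e α μ l s : ℝ) : ℝ :=
  l ^ ((α - 1) / μ) * (Ioo a e).indicator (fun x => f x * exp (-(l * H x))) (a + l ^ (-μ⁻¹) * s)

section Rescaled

variable {f H : ℝ → ℝ} {a e α μ l s : ℝ}

theorem integral_laplaceRescaled (hl : 0 < l) :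
    ∫ s, laplaceRescaled f H a e α μ l s =
      l ^ (α / μ) * ∫ x in Ioo a e, f x * exp (-(l * H x)) := by
  simp only [laplaceRescaled]
  rw [integral_const_mul, integral_comp_add_mul_left,
    integral_indicator measurableSet_Ioo, smul_eq_mul, ← rpow_neg hl.le, neg_neg,
    abs_of_pos (rpow_pos_of_pos hl _), ← mul_assoc, ← rpow_add hl]
  ring_nf

theorem laplaceRescaled_of_nonpos (hl : 0 < l) (hs : s ≤ 0) :
    laplaceRescaled f H a e α μ l s = 0 := by
  have hx : a + l ^ (-μ⁻¹) * s ∉ Ioo a e := fun hx =>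
    (mul_nonpos_of_nonneg_of_nonpos (rpow_nonneg hl.le _) hs).not_gt (by linarith [hx.1])
  rw [laplaceRescaled, indicator_of_notMem hx, mul_zero]

theorem laplaceRescaled_of_mem (hμ : μ ≠ 0) (hl : 0 < l) (hs : 0 < s)
    (hx : a + l ^ (-μ⁻¹) * s ∈ Ioo a e) :
    laplaceRescaled f H a e α μ l s =
      f (a + l ^ (-μ⁻¹) * s) / (l ^ (-μ⁻¹) * s) ^ (α - 1) * s ^ (α - 1) *
        exp (-(H (a + l ^ (-μ⁻¹) * s) / (l ^ (-μ⁻¹) * s) ^ μ) * s ^ μ) := by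
  rw [laplaceRescaled, indicator_of_mem hx, rpow_mul_mul_exp_neg_mul_eq hl hs hμ]

theorem norm_laplaceRescaled_le {B c : ℝ} (hμ : μ ≠ 0) (hl : 0 < l) (hB : 0 ≤ B)
    (hfB : ∀ x ∈ Ioo a e, |f x / (x - a) ^ (α - 1)| ≤ B)
    (hHc : ∀ x ∈ Ioo a e, c ≤ H x / (x - a) ^ μ) :
    ‖laplaceRescaled f H a e α μ l s‖ ≤
      (Ioi 0).indicator (fun s => B * (s ^ (α - 1) * exp (-c * s ^ μ))) s := by
  rcases le_or_gt s 0 with hs | hs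
  · simp [laplaceRescaled_of_nonpos hl hs, indicator_of_notMem (notMem_Ioi.2 hs)]
  rw [indicator_of_mem (mem_Ioi.2 hs)]
  by_cases hx : a + l ^ (-μ⁻¹) * s ∈ Ioo a e
  · have hfx := hfB _ hx
    have hHx := hHc _ hx
    rw [add_sub_cancel_left] at hfx hHx
    rw [laplaceRescaled_of_mem hμ hl hs hx, norm_mul, norm_mul, Real.norm_eq_abs,
      norm_of_nonneg (rpow_nonneg hs.le _), norm_of_nonneg (exp_pos _).le, mul_assoc]
    gcongr
  · rw [laplaceRescaled, indicator_of_notMem hx, mul_zero, norm_zero]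
    positivity

theorem tendsto_laplaceRescaled {P Q : ℝ} (hμ : 0 < μ) (hae : a < e)
    (hf : Tendsto (fun x => f x / (x - a) ^ (α - 1)) (𝓝[>] a) (𝓝 P))
    (hH : Tendsto (fun x => H x / (x - a) ^ μ) (𝓝[>] a) (𝓝 Q)) (s : ℝ) :
    Tendsto (fun l => laplaceRescaled f H a e α μ l s) atTop
      (𝓝 ((Ioi 0).indicator (fun s => P * (s ^ (α - 1) * exp (-Q * s ^ μ))) s)) := by
  rcases le_or_gt s 0 with hs | hs
  · rw [indicator_of_notMem (notMem_Ioi.2 hs)]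
    refine tendsto_const_nhds.congr' ?_
    filter_upwards [eventually_gt_atTop 0] with l hl using (laplaceRescaled_of_nonpos hl hs).symm
  rw [indicator_of_mem (mem_Ioi.2 hs), ← mul_assoc]
  have hx := tendsto_add_rpow_neg_inv_mul_nhdsGT hμ hs a
  have hfx : Tendsto (fun l => f (a + l ^ (-μ⁻¹) * s) / (l ^ (-μ⁻¹) * s) ^ (α - 1))
      atTop (𝓝 P) := by
    simpa only [Function.comp_def, add_sub_cancel_left] using hf.comp hx
  have hHx : Tendsto (fun l => H (a + l ^ (-μ⁻¹) * s) / (l ^ (-μ⁻¹) * s) ^ μ) atTop (𝓝 Q) := by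
    simpa only [Function.comp_def, add_sub_cancel_left] using hH.comp hx
  refine ((hfx.mul_const _).mul ((continuous_exp.tendsto _).comp (hHx.neg.mul_const _))).congr' ?_
  filter_upwards [hx (Ioo_mem_nhdsGT hae), eventually_gt_atTop 0] with l hxl hl
  exact (laplaceRescaled_of_mem hμ.ne' hl hs hxl).symm

theorem aestronglyMeasurable_laplaceRescaled (hl : 0 < l)
    (hmeas : AEStronglyMeasurable (fun x => f x * exp (-(l * H x))) (volume.restrict (Ioo a e))) :
    AEStronglyMeasurable (laplaceRescaled f H a e α μ l) volume :=
  (((aestronglyMeasurable_indicator_iff measurableSet_Ioo).2 hmeas).comp_add_mul_left a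
    (rpow_pos_of_pos hl _).ne').const_mul _

end Rescaled

theorem tendsto_rpow_mul_integral_Ioo_mul_exp_neg_mul {f H : ℝ → ℝ} {a e α μ P Q B c : ℝ}
    (hα : 0 < α) (hμ : 0 < μ) (hae : a < e) (hc : 0 < c)
    (hf : Tendsto (fun x => f x / (x - a) ^ (α - 1)) (𝓝[>] a) (𝓝 P))
    (hH : Tendsto (fun x => H x / (x - a) ^ μ) (𝓝[>] a) (𝓝 Q))
    (hfB : ∀ x ∈ Ioo a e, |f x / (x - a) ^ (α - 1)| ≤ B)
    (hHc : ∀ x ∈ Ioo a e, c ≤ H x / (x - a) ^ μ)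
    (hmeas : ∀ᶠ l in atTop,
      AEStronglyMeasurable (fun x => f x * exp (-(l * H x))) (volume.restrict (Ioo a e))) :
    Tendsto (fun l => l ^ (α / μ) * ∫ x in Ioo a e, f x * exp (-(l * H x))) atTop
      (𝓝 (P * ∫ s in Ioi 0, s ^ (α - 1) * exp (-Q * s ^ μ))) := by
  have hB : 0 ≤ B := (abs_nonneg _).trans (hfB ((a + e) / 2) ⟨by linarith, by linarith⟩)
  have hdom : Integrable ((Ioi 0).indicator fun s => B * (s ^ (α - 1) * exp (-c * s ^ μ))) :=
    (integrable_indicator_iff measurableSet_Ioi).2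
      ((integrableOn_rpow_mul_exp_neg_mul_rpow (by linarith) hμ hc).const_mul B)
  have hDCT := tendsto_integral_filter_of_dominated_convergence _
    (by filter_upwards [hmeas, eventually_gt_atTop 0] with l hl hl0 using
      aestronglyMeasurable_laplaceRescaled hl0 hl)
    (by filter_upwards [eventually_gt_atTop 0] with l hl using
      ae_of_all _ fun s => norm_laplaceRescaled_le hμ.ne' hl hB hfB hHc)
    hdom (ae_of_all _ (tendsto_laplaceRescaled hμ hae hf hH))
  rw [integral_indicator measurableSet_Ioi, integral_const_mul] at hDCT
  refine hDCT.congr' ?_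
  filter_upwards [eventually_gt_atTop 0] with l hl using integral_laplaceRescaled hl

theorem tendsto_rpow_mul_setIntegral_mul_exp_neg_mul {f H : ℝ → ℝ} {S : Set ℝ}
    {a α μ P Q l₀ : ℝ} (hα : 0 < α) (hμ : 0 < μ) (hQ : 0 < Q) (hS : MeasurableSet S)
    (hSa : S ⊆ Ioi a) (hS_nhds : S ∈ 𝓝[>] a)
    (hf : Tendsto (fun x => f x / (x - a) ^ (α - 1)) (𝓝[>] a) (𝓝 P))
    (hH : Tendsto (fun x => H x / (x - a) ^ μ) (𝓝[>] a) (𝓝 Q))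
    (hgap : ∀ e > a, ∃ c > 0, ∀ x ∈ S, e ≤ x → c ≤ H x)
    (hint : ∀ l ≥ l₀, IntegrableOn (fun x => f x * exp (-(l * H x))) S) :
    Tendsto (fun l => l ^ (α / μ) * ∫ x in S, f x * exp (-(l * H x))) atTop
      (𝓝 (P * (Gamma (α / μ) / (μ * Q ^ (α / μ))))) := by
  obtain ⟨e, hae, he⟩ := mem_nhdsGT_iff_exists_Ioo_subset.1 (Filter.Eventually.and hS_nhds
    ((hf.abs.eventually (gt_mem_nhds (lt_add_one |P|))).and
      (hH.eventually (lt_mem_nhds (half_lt_self hQ)))))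
  have hSe : S ∩ Iio e = Ioo a e :=
    Subset.antisymm (fun x hx => ⟨hSa hx.1, hx.2⟩) fun x hx => ⟨(he hx).1, hx.2⟩
  obtain ⟨c, hc, hcS⟩ := hgap e hae
  have hmain := tendsto_rpow_mul_integral_Ioo_mul_exp_neg_mul hα hμ hae (half_pos hQ) hf hH
    (fun x hx => (he hx).2.1.le) (fun x hx => (he hx).2.2.le)
    (by filter_upwards [eventually_ge_atTop l₀] with l hl using
      ((hint l hl).mono_set (hSe ▸ inter_subset_left)).aestronglyMeasurable)
  have htail := tendsto_rpow_mul_integral_mul_exp_neg_mul_of_ae_le (α / μ) hc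
    (ae_restrict_of_forall_mem (hS.diff measurableSet_Iio) fun x hx =>
      hcS x hx.1 (notMem_Iio.1 hx.2))
    ((hint l₀ le_rfl).mono_set sdiff_subset)
  rw [integral_Ioi_rpow_sub_one_mul_exp_neg_mul_rpow hα hμ hQ] at hmain
  rw [← add_zero (P * _)]
  refine (hmain.add htail).congr' ?_
  filter_upwards [eventually_ge_atTop l₀] with l hl
  rw [← integral_inter_add_sdiff measurableSet_Iio (hint l hl), hSe, mul_add]

theorem endpoint_laplace_general (a : ℝ) (b : EReal) (hab : (a : EReal) < b)
    (h φ : ℝ → ℝ) (hA : ℝ)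
    (hinf : ∀ δ > 0, ∃ c > 0, ∀ x : ℝ, a + δ ≤ x → (x : EReal) < b → c ≤ h x - hA)
    (mu alpha a₀ b₀ : ℝ) (hmu : 0 < mu) (halpha : 0 < alpha) (ha₀ : 0 < a₀) (hb₀ : b₀ ≠ 0)
    (hh_asymp : Tendsto (fun x => (h x - hA) / (a₀ * (x - a) ^ mu))
      (nhdsWithin a (Set.Ioi a)) (𝓝 1))
    (hφ_asymp : Tendsto (fun x => φ x / (b₀ * (x - a) ^ (alpha - 1)))
      (nhdsWithin a (Set.Ioi a)) (𝓝 1))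
    (lam0 : ℝ)
    (hint : ∀ l : ℝ, lam0 ≤ l →
      IntegrableOn (fun x => φ x * Real.exp (-l * h x))
        {x : ℝ | a < x ∧ (x : EReal) < b} volume) :
    Tendsto (fun l : ℝ =>
        l ^ (alpha / mu) * Real.exp (l * hA) *
          ∫ x in {x : ℝ | a < x ∧ (x : EReal) < b}, φ x * Real.exp (-l * h x))
      atTop (𝓝 (Real.Gamma (alpha / mu) * b₀ / (mu * a₀ ^ (alpha / mu)))) := by
  set S := {x : ℝ | a < x ∧ (x : EReal) < b}
  have hshift : ∀ l x, exp (l * hA) * (φ x * exp (-l * h x)) = φ x * exp (-(l * (h x - hA))) :=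
    fun l x => by rw [mul_left_comm, ← exp_add]; ring_nf
  have hint' : ∀ l ≥ lam0, IntegrableOn (fun x => φ x * exp (-(l * (h x - hA)))) S := by
    intro l hl
    have := (hint l hl).const_mul (exp (l * hA))
    simp only [hshift] at this
    exact this
  obtain ⟨r, har, hrb⟩ := EReal.lt_iff_exists_real_btwn.1 hab
  have hS_nhds : S ∈ 𝓝[>] a := mem_nhdsGT_iff_exists_Ioo_subset.2
    ⟨r, EReal.coe_lt_coe_iff.1 har, fun x hx => ⟨hx.1, (EReal.coe_lt_coe_iff.2 hx.2).trans hrb⟩⟩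
  have hgap : ∀ e > a, ∃ c > 0, ∀ x ∈ S, e ≤ x → c ≤ h x - hA := fun e he =>
    (hinf (e - a) (sub_pos.2 he)).imp fun c ⟨hc, hcS⟩ =>
      ⟨hc, fun x hx hex => hcS x (by rwa [add_sub_cancel]) hx.2⟩
  have hS : MeasurableSet S :=
    measurableSet_Ioi.inter (measurableSet_lt measurable_coe_real_ereal measurable_const)
  have hlim := tendsto_rpow_mul_setIntegral_mul_exp_neg_mul halpha hmu ha₀ hS
    (fun x hx => hx.1) hS_nhds (tendsto_div_of_tendsto_div_const_mul hb₀ hφ_asymp)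
    (tendsto_div_of_tendsto_div_const_mul ha₀.ne' hh_asymp) hgap hint'
  rw [mul_comm (Gamma _), mul_div_assoc]
  refine hlim.congr fun l => ?_
  rw [mul_assoc, ← integral_const_mul (exp (l * hA))]
  simp only [hshift]

/-- Wong's endpoint Laplace approximation: if the exponent `h` is minimized at the left
endpoint `a` with `h(x) - h_a ∼ a₀ (x-a)^μ` and `φ(x) ∼ b₀ (x-a)^{α-1}` as `x → a⁺`, then
`λ^{α/μ} e^{λ h_a} I(λ) → Γ(α/μ) b₀ / (μ a₀^{α/μ})` as `λ → ∞`. -/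
theorem endpoint_laplace (a : ℝ) (b : EReal) (hab : (a : EReal) < b)
    (h φ : ℝ → ℝ) (hA : ℝ)
    (hlim : Tendsto h (nhdsWithin a (Set.Ioi a)) (𝓝 hA))
    (hgt : ∀ x : ℝ, a < x → (x : EReal) < b → hA < h x)
    (hinf : ∀ δ > 0, ∃ c > 0, ∀ x : ℝ, a + δ ≤ x → (x : EReal) < b → c ≤ h x - hA)
    (ε : ℝ) (hε : 0 < ε)
    (hdiff : ∀ x ∈ Set.Ioo a (a + ε), DifferentiableAt ℝ h x)
    (hφcont : ContinuousOn φ (Set.Ioo a (a + ε)))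
    (mu alpha a₀ b₀ : ℝ) (hmu : 0 < mu) (halpha : 0 < alpha) (ha₀ : 0 < a₀) (hb₀ : b₀ ≠ 0)
    (hh_asymp : Tendsto (fun x => (h x - hA) / (a₀ * (x - a) ^ mu))
      (nhdsWithin a (Set.Ioi a)) (𝓝 1))
    (hφ_asymp : Tendsto (fun x => φ x / (b₀ * (x - a) ^ (alpha - 1)))
      (nhdsWithin a (Set.Ioi a)) (𝓝 1))
    (hh'_asymp : Tendsto (fun x => deriv h x / (mu * a₀ * (x - a) ^ (mu - 1)))
      (nhdsWithin a (Set.Ioi a)) (𝓝 1))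
    (lam0 : ℝ)
    (hint : ∀ l : ℝ, lam0 ≤ l →
      IntegrableOn (fun x => φ x * Real.exp (-l * h x))
        {x : ℝ | a < x ∧ (x : EReal) < b} volume) :
    Tendsto (fun l : ℝ =>
        l ^ (alpha / mu) * Real.exp (l * hA) *
          ∫ x in {x : ℝ | a < x ∧ (x : EReal) < b}, φ x * Real.exp (-l * h x))
      atTop (𝓝 (Real.Gamma (alpha / mu) * b₀ / (mu * a₀ ^ (alpha / mu)))) :=
  endpoint_laplace_general a b hab h φ hA hinf mu alpha a₀ b₀ hmu halpha ha₀ hb₀ hh_asymp hφ_asymp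
    lam0 hint
end

section
/- Let −∞ < a < b ≤ ∞ and let h, φ be real-valued functions that are smooth (C^∞) on a right neighborhood of a and continuous on (a,b), with I(λ) := ∫_a^b φ(x) e^{−λ h(x)} dx. Assume: (i) h(x) > h(a) for all x ∈ (a,b) and for every δ > 0, inf_{x ∈ [a+δ, b)} (h(x) − h(a)) > 0; (ii) h'(a) > 0 and φ(a) ≠ 0; (iii) ∫_a^b |φ(x)| e^{−λ h(x)} dx < ∞ for all sufficiently large λ. Then there exist M > 0 and λ_1 such that for all λ ≥ λ_1, | I(λ) / [ (φ(a)/(λ h'(a))) e^{−λ h(a)} ] − 1 | ≤ M λ^{−1}. -/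
open MeasureTheory Filter
open scoped Topology
open Set Real

set_option maxHeartbeats 1000000

section LaplaceAux

lemma lap_exp_le_inv {u : ℝ} (hu : 0 < u) : Real.exp (-u) ≤ 1 / u := by
  have h1 : u ≤ Real.exp u := by linarith [Real.add_one_le_exp u]
  rw [Real.exp_neg]
  exact inv_anti₀ hu h1 |>.trans_eq (one_div u).symm


lemma lap_xexp (x : ℝ) : x * Real.exp (-x) ≤ 1 := by
  rcases le_total x 0 with hx | hx
  · have := Real.exp_pos (-x)
    nlinarith
  · have h2 : Real.exp (-x) = (Real.exp x)⁻¹ := Real.exp_neg x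
    have := Real.exp_pos x
    rw [h2, mul_inv_le_iff₀ this, one_mul]
    linarith [Real.add_one_le_exp x]

lemma lap_texp {s t : ℝ} (hs : 0 < s) (ht : 0 ≤ t) : t * Real.exp (-(s * t)) ≤ 1 / s := by
  have := lap_xexp (s * t)
  rw [le_div_iff₀ hs]
  calc t * Real.exp (-(s*t)) * s = (s*t) * Real.exp (-(s*t)) := by ring
  _ ≤ 1 := lap_xexp _

lemma lap_t2exp {s t : ℝ} (hs : 0 < s) (ht : 0 ≤ t) :
    t ^ 2 * Real.exp (-(s * t)) ≤ 4 / s ^ 2 := by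
  have h1 : t * Real.exp (-(s/2 * t)) ≤ 2 / s := by
    have := lap_texp (s := s/2) (t := t) (by linarith) ht
    rw [div_div_eq_mul_div, one_mul] at this; linarith
  have h2 : Real.exp (-(s*t)) = Real.exp (-(s/2*t)) * Real.exp (-(s/2*t)) := by
    rw [← Real.exp_add]; ring_nf
  have hnn : 0 ≤ t * Real.exp (-(s/2*t)) := by positivity
  calc t^2 * Real.exp (-(s*t)) = (t * Real.exp (-(s/2*t))) * (t * Real.exp (-(s/2*t))) := by
        rw [h2]; ring
  _ ≤ (2/s) * (2/s) := mul_le_mul h1 h1 hnn (by positivity)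
  _ = 4 / s^2 := by ring

lemma lap_exp_le {u : ℝ} (hu : 0 < u) : Real.exp (-u) ≤ 4 / u ^ 2 := by
  have h1 : u / 2 ≤ Real.exp (u/2) := by linarith [Real.add_one_le_exp (u/2)]
  have h2 : Real.exp u = Real.exp (u/2) * Real.exp (u/2) := by rw [← Real.exp_add]; ring_nf
  have h3 : u^2/4 ≤ Real.exp u := by
    rw [h2]
    calc u^2/4 = (u/2)*(u/2) := by ring
    _ ≤ _ := mul_le_mul h1 h1 (by linarith) (Real.exp_pos _).le
  have h4 : (0:ℝ) < u^2/4 := by positivity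
  rw [Real.exp_neg]
  calc (Real.exp u)⁻¹ ≤ (u^2/4)⁻¹ := inv_anti₀ h4 h3
  _ = 4/u^2 := by rw [inv_div]

lemma lap_exp_sub {u v : ℝ} (huv : u ≤ v) :
    |Real.exp (-u) - Real.exp (-v)| ≤ (v - u) * Real.exp (-u) := by
  have h1 : Real.exp (-v) = Real.exp (-u) * Real.exp (-(v-u)) := by
    rw [← Real.exp_add]; ring_nf
  have h2 : 1 - (v - u) ≤ Real.exp (-(v-u)) := by linarith [Real.add_one_le_exp (-(v-u))]
  have h3 : Real.exp (-(v-u)) ≤ 1 := Real.exp_le_one_iff.mpr (by linarith)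
  have hp := Real.exp_pos (-u)
  rw [abs_of_nonneg]
  · nlinarith
  · nlinarith


lemma lap_exp_int {c : ℝ} (hc : 0 < c) (a : ℝ) :
    IntegrableOn (fun x => Real.exp (-(c * (x - a)))) (Ioi a) := by
  have : (fun x => Real.exp (-(c * (x - a)))) = fun x => Real.exp (c * a) * Real.exp (-c * x) := by
    funext x; rw [← Real.exp_add]; ring_nf
  rw [this]
  exact (exp_neg_integrableOn_Ioi a hc).const_mul _

lemma lap_exp_eval {c : ℝ} (hc : 0 < c) (a : ℝ) :
    ∫ x in Ioi a, Real.exp (-(c * (x - a))) = 1 / c := by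
  have key := integral_Ioi_of_hasDerivAt_of_tendsto'
    (f := fun x => -Real.exp (-(c * (x - a))) / c)
    (f' := fun x => Real.exp (-(c * (x - a)))) (a := a) (m := 0)
    (fun x _ => by
      have h1 : HasDerivAt (fun x : ℝ => -(c * (x - a))) (-c) x := by
        have h0 : HasDerivAt (fun y : ℝ => c * (y - a)) c x := by
          simpa using ((hasDerivAt_id x).sub_const a).const_mul c
        exact h0.neg
      have := (h1.exp).neg.div_const c
      simpa [mul_comm, mul_div_assoc, mul_div_cancel_left₀, ne_of_gt hc] using this
      ) (lap_exp_int hc a)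
    (by
      have h2 : Tendsto (fun x : ℝ => -(c * (x - a))) atTop atBot := by
        apply Filter.tendsto_neg_atTop_atBot.comp
        exact (tendsto_atTop_add_const_right _ (-a) tendsto_id).const_mul_atTop hc
      have := (Real.tendsto_exp_atBot.comp h2).neg.div_const c
      simpa using this)
  rw [key]; field_simp; simp


lemma lap_ptbound (L K pa px l hp t g : ℝ) (hL : 0 ≤ L) (hK : 0 ≤ K) (hl : 0 < l)
    (hhp : 0 < hp) (ht : 0 ≤ t) (hg2 : hp * t / 2 ≤ g) (htay : |g - hp * t| ≤ K * t ^ 2)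
    (hlip : |px - pa| ≤ L * t) :
    |px * Real.exp (-(l * g)) - pa * Real.exp (-(l * (hp * t)))| ≤
      (4 * L / (l * hp) + 64 * K * |pa| / (l * hp ^ 2)) * Real.exp (-(l * hp / 4 * t)) := by
  have hlhp : 0 < l * hp := by positivity
  have hs4 : (0:ℝ) < l * hp / 4 := by positivity
  have hE1 : Real.exp (-(l * g)) ≤ Real.exp (-(l * hp / 2 * t)) :=
    Real.exp_le_exp.mpr (by nlinarith)
  have hE2 : Real.exp (-(l * (hp * t))) ≤ Real.exp (-(l * hp / 2 * t)) :=
    Real.exp_le_exp.mpr (by nlinarith)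
  have habs := abs_le.1 htay
  have hsub : |Real.exp (-(l * g)) - Real.exp (-(l * (hp * t)))| ≤
      l * (K * t ^ 2) * Real.exp (-(l * hp / 2 * t)) := by
    rcases le_total (l * g) (l * (hp * t)) with hcase | hcase
    · have h0 := lap_exp_sub hcase
      have hd1 : l * (hp * t) - l * g ≤ l * (K * t ^ 2) := by nlinarith
      refine h0.trans (mul_le_mul hd1 hE1 (Real.exp_pos _).le (by positivity))
    · have h0 := lap_exp_sub hcase
      rw [abs_sub_comm]
      have hd1 : l * g - l * (hp * t) ≤ l * (K * t ^ 2) := by nlinarith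
      refine h0.trans (mul_le_mul hd1 hE2 (Real.exp_pos _).le (by positivity))
  have htri : |px * Real.exp (-(l * g)) - pa * Real.exp (-(l * (hp * t)))| ≤
      |px - pa| * Real.exp (-(l * g)) +
      |pa| * |Real.exp (-(l * g)) - Real.exp (-(l * (hp * t)))| := by
    have heq : px * Real.exp (-(l * g)) - pa * Real.exp (-(l * (hp * t))) =
        (px - pa) * Real.exp (-(l * g)) +
        pa * (Real.exp (-(l * g)) - Real.exp (-(l * (hp * t)))) := by ring
    rw [heq]
    refine (abs_add_le _ _).trans ?_
    rw [abs_mul, abs_mul, abs_of_pos (Real.exp_pos _)]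
  have hstep : |px - pa| * Real.exp (-(l * g)) +
      |pa| * |Real.exp (-(l * g)) - Real.exp (-(l * (hp * t)))| ≤
      L * t * Real.exp (-(l * hp / 2 * t)) +
      |pa| * (l * (K * t ^ 2) * Real.exp (-(l * hp / 2 * t))) := by
    have h1 : |px - pa| * Real.exp (-(l * g)) ≤ L * t * Real.exp (-(l * hp / 2 * t)) :=
      mul_le_mul hlip hE1 (Real.exp_pos _).le (by positivity)
    have h2 := mul_le_mul_of_nonneg_left hsub (abs_nonneg pa)
    exact add_le_add h1 h2
  have hsplit : Real.exp (-(l * hp / 2 * t)) =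
      Real.exp (-(l * hp / 4 * t)) * Real.exp (-(l * hp / 4 * t)) := by
    rw [← Real.exp_add]; ring_nf
  have hb1 : t * Real.exp (-(l * hp / 4 * t)) ≤ 4 / (l * hp) := by
    have h0 := lap_texp hs4 ht
    have : (1:ℝ) / (l * hp / 4) = 4 / (l * hp) := by rw [div_div_eq_mul_div, one_mul]
    linarith [h0.trans_eq this]
  have hb2 : t ^ 2 * Real.exp (-(l * hp / 4 * t)) ≤ 64 / (l * hp) ^ 2 := by
    have h0 := lap_t2exp hs4 ht
    have heq2 : (4:ℝ) / (l * hp / 4) ^ 2 = 64 / (l * hp) ^ 2 := by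
      field_simp; ring
    linarith [h0.trans_eq heq2]
  have hEpos : (0:ℝ) < Real.exp (-(l * hp / 4 * t)) := Real.exp_pos _
  have hfin : L * t * Real.exp (-(l * hp / 2 * t)) +
      |pa| * (l * (K * t ^ 2) * Real.exp (-(l * hp / 2 * t))) ≤
      (4 * L / (l * hp) + 64 * K * |pa| / (l * hp ^ 2)) * Real.exp (-(l * hp / 4 * t)) := by
    rw [hsplit]
    have e1 : L * t * (Real.exp (-(l * hp / 4 * t)) * Real.exp (-(l * hp / 4 * t))) =
        L * (t * Real.exp (-(l * hp / 4 * t))) * Real.exp (-(l * hp / 4 * t)) := by ring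
    have e2 : |pa| * (l * (K * t ^ 2) * (Real.exp (-(l * hp / 4 * t)) * Real.exp (-(l * hp / 4 * t)))) =
        (|pa| * l * K) * (t ^ 2 * Real.exp (-(l * hp / 4 * t))) * Real.exp (-(l * hp / 4 * t)) := by
      ring
    rw [e1, e2]
    have f1 : L * (t * Real.exp (-(l * hp / 4 * t))) ≤ L * (4 / (l * hp)) :=
      mul_le_mul_of_nonneg_left hb1 hL
    have f2 : (|pa| * l * K) * (t ^ 2 * Real.exp (-(l * hp / 4 * t))) ≤
        (|pa| * l * K) * (64 / (l * hp) ^ 2) :=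
      mul_le_mul_of_nonneg_left hb2 (by positivity)
    have g1 : L * (4 / (l * hp)) = 4 * L / (l * hp) := by ring
    have g2 : (|pa| * l * K) * (64 / (l * hp) ^ 2) = 64 * K * |pa| / (l * hp ^ 2) := by
      field_simp
    have := add_le_add (mul_le_mul_of_nonneg_right f1 hEpos.le)
      (mul_le_mul_of_nonneg_right f2 hEpos.le)
    rw [g1, g2] at this
    calc L * (t * Real.exp (-(l * hp / 4 * t))) * Real.exp (-(l * hp / 4 * t)) +
        (|pa| * l * K) * (t ^ 2 * Real.exp (-(l * hp / 4 * t))) * Real.exp (-(l * hp / 4 * t))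
        ≤ 4 * L / (l * hp) * Real.exp (-(l * hp / 4 * t)) +
          64 * K * |pa| / (l * hp ^ 2) * Real.exp (-(l * hp / 4 * t)) := this
    _ = (4 * L / (l * hp) + 64 * K * |pa| / (l * hp ^ 2)) * Real.exp (-(l * hp / 4 * t)) := by
        ring
  exact htri.trans (hstep.trans hfin)


lemma lap_core (a δ : ℝ) (hδ : 0 < δ) (S : Set ℝ) (hSm : MeasurableSet S)
    (hS1 : Set.Ioc a (a + δ) ⊆ S)
    (h φ : ℝ → ℝ) (h' : ℝ) (hd_pos : 0 < h') (K L : ℝ) (hK : 0 ≤ K) (hL : 0 ≤ L)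
    (htay : ∀ x ∈ Set.Icc a (a + δ), |h x - h a - h' * (x - a)| ≤ K * (x - a)^2)
    (hlip : ∀ x ∈ Set.Icc a (a + δ), |φ x - φ a| ≤ L * (x - a))
    (hKδ : K * δ ≤ h' / 2)
    (c : ℝ) (hc : 0 < c) (htail : ∀ x ∈ S \ Set.Ioc a (a + δ), c ≤ h x - h a)
    (lam0 : ℝ)
    (hint : ∀ l : ℝ, lam0 ≤ l → IntegrableOn (fun x => φ x * Real.exp (-l * h x)) S volume) :
    ∃ C ≥ 0, ∀ l : ℝ, lam0 ≤ l → 1 ≤ l →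
      |(∫ x in S, φ x * Real.exp (-(l * (h x - h a)))) - φ a / (l * h')| ≤ C / l^2 := by
  have hIg : ∀ m : ℝ, lam0 ≤ m →
      IntegrableOn (fun x => φ x * Real.exp (-(m * (h x - h a)))) S volume := by
    intro m hm
    have h1 := (hint m hm).const_mul (Real.exp (m * h a))
    refine IntegrableOn.congr_fun h1 (fun x _ => ?_) hSm
    have hexp : Real.exp (m * h a) * Real.exp (-m * h x) = Real.exp (-(m * (h x - h a))) := by
      rw [← Real.exp_add]; ring_nf
    calc Real.exp (m * h a) * (φ x * Real.exp (-m * h x))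
        = φ x * (Real.exp (m * h a) * Real.exp (-m * h x)) := by ring
    _ = φ x * Real.exp (-(m * (h x - h a))) := by rw [hexp]
  set C₀ : ℝ := ∫ x in S, ‖φ x * Real.exp (-(lam0 * (h x - h a)))‖ with hC₀_def
  have hC₀ : 0 ≤ C₀ := integral_nonneg (fun x => norm_nonneg _)
  refine ⟨16 * L / h' ^ 2 + 256 * K * |φ a| / h' ^ 3
      + 4 * Real.exp (lam0 * c) * C₀ / c ^ 2 + |φ a| / (h' ^ 2 * δ), by positivity,
      fun l hl hl1 => ?_⟩
  have hl0 : 0 < l := by linarith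
  have hlh' : 0 < l * h' := by positivity
  have hIl := hIg l hl
  have hI0 := hIg lam0 le_rfl
  have hg_lb : ∀ x ∈ Set.Icc a (a + δ), h' * (x - a) / 2 ≤ h x - h a := by
    intro x hx
    have h1 := (abs_le.1 (htay x hx)).1
    have hxa : 0 ≤ x - a := by linarith [hx.1]
    have hxd : x - a ≤ δ := by linarith [hx.2]
    have e1 : K * (x - a) ≤ K * δ := mul_le_mul_of_nonneg_left hxd hK
    have h2 : K * (x - a)^2 ≤ h' / 2 * (x - a) := by nlinarith
    nlinarith
  -- the three pieces
  set f : ℝ → ℝ := fun x => φ x * Real.exp (-(l * (h x - h a))) with hf_def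
  set e2 : ℝ → ℝ := fun x => φ a * Real.exp (-(l * h' * (x - a))) with he2_def
  have hIoc_sub_S : Set.Ioc a (a + δ) ⊆ S := hS1
  have hIl_Ioc : IntegrableOn f (Set.Ioc a (a + δ)) volume := hIl.mono_set hS1
  have he2cont : Continuous e2 := by
    rw [he2_def]; fun_prop
  have he2int_Ioi : IntegrableOn e2 (Set.Ioi a) volume := by
    rw [he2_def]
    exact (lap_exp_int (by positivity : (0:ℝ) < l * h') a).const_mul (φ a)
  have he2int_Ioc : IntegrableOn e2 (Set.Ioc a (a + δ)) volume :=
    he2int_Ioi.mono_set Set.Ioc_subset_Ioi_self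
  -- split the integral over S
  have hsplit : ∫ x in S, f x = (∫ x in Set.Ioc a (a + δ), f x) + ∫ x in S \ Set.Ioc a (a + δ), f x := by
    have := integral_diff measurableSet_Ioc hIl hS1 (f := f) (μ := volume)
    linarith
  -- main term as an integral over Ioi a
  have hmain : φ a / (l * h') = ∫ x in Set.Ioi a, e2 x := by
    simp only [he2_def]
    rw [integral_const_mul, lap_exp_eval hlh' a]
    field_simp
  have hsetid : Set.Ioi a \ Set.Ioc a (a + δ) = Set.Ioi (a + δ) := by
    ext x
    simp only [Set.mem_diff, Set.mem_Ioi, Set.mem_Ioc, not_and, not_le]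
    constructor
    · rintro ⟨h1, h2⟩; exact h2 h1
    · intro hx; exact ⟨by linarith, fun _ => hx⟩
  have hmainsplit : ∫ x in Set.Ioi a, e2 x =
      (∫ x in Set.Ioc a (a + δ), e2 x) + ∫ x in Set.Ioi (a + δ), e2 x := by
    have := integral_diff (t := Set.Ioc a (a + δ)) measurableSet_Ioc he2int_Ioi Set.Ioc_subset_Ioi_self (f := e2) (μ := volume)
    rw [hsetid] at this
    linarith
  -- T1 : initial interval comparison
  set B : ℝ := 4 * L / (l * h') + 64 * K * |φ a| / (l * h' ^ 2) with hB_def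
  have hB : 0 ≤ B := by positivity
  set G : ℝ → ℝ := fun x => B * Real.exp (-(l * h' / 4 * (x - a))) with hG_def
  have hGint_Ioi : IntegrableOn G (Set.Ioi a) volume := by
    rw [hG_def]
    exact (lap_exp_int (by positivity : (0:ℝ) < l * h' / 4) a).const_mul B
  have hGint_Ioc : IntegrableOn G (Set.Ioc a (a + δ)) volume :=
    hGint_Ioi.mono_set Set.Ioc_subset_Ioi_self
  have hpt : ∀ x ∈ Set.Ioc a (a + δ), ‖f x - e2 x‖ ≤ G x := by
    intro x hx
    have hxIcc : x ∈ Set.Icc a (a + δ) := Set.Ioc_subset_Icc_self hx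
    have ht0 : 0 ≤ x - a := by linarith [hxIcc.1]
    have key := lap_ptbound L K (φ a) (φ x) l h' (x - a) (h x - h a) hL hK hl0 hd_pos ht0
      (hg_lb x hxIcc) (htay x hxIcc) (hlip x hxIcc)
    have hma : l * (h' * (x - a)) = l * h' * (x - a) := (mul_assoc l h' (x - a)).symm
    rw [hma] at key
    exact key
  have hT1 : ‖∫ x in Set.Ioc a (a + δ), (f x - e2 x)‖ ≤
      (16 * L / h' ^ 2 + 256 * K * |φ a| / h' ^ 3) / l ^ 2 := by
    have hb := norm_integral_le_of_norm_le (hGint_Ioc) (by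
      filter_upwards [ae_restrict_mem measurableSet_Ioc] with x hx
      exact hpt x hx)
    refine hb.trans ?_
    have hmono : ∫ x in Set.Ioc a (a + δ), G x ≤ ∫ x in Set.Ioi a, G x := by
      apply setIntegral_mono_set hGint_Ioi
      · filter_upwards with x
        exact mul_nonneg hB (Real.exp_pos _).le
      · exact HasSubset.Subset.eventuallyLE Set.Ioc_subset_Ioi_self
    refine hmono.trans ?_
    have heval : ∫ x in Set.Ioi a, G x = B * (4 / (l * h')) := by
      simp only [hG_def]
      rw [integral_const_mul, lap_exp_eval (by positivity : (0:ℝ) < l * h' / 4) a]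
      rw [div_div_eq_mul_div, one_mul]
    rw [heval, hB_def]
    refine le_of_eq ?_
    field_simp
    ring
  -- T3 : tail of the main term
  have hT3eval : ∫ x in Set.Ioi (a + δ), e2 x = φ a * Real.exp (-(l * h' * δ)) * (1 / (l * h')) := by
    have hfe : e2 = fun x => (φ a * Real.exp (-(l * h' * δ))) * Real.exp (-(l * h' * (x - (a + δ)))) := by
      funext x; simp only [he2_def]
      have hx2 : Real.exp (-(l * h' * (x - a))) =
          Real.exp (-(l * h' * δ)) * Real.exp (-(l * h' * (x - (a + δ)))) := by
        rw [← Real.exp_add]; ring_nf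
      rw [hx2]; ring
    rw [hfe, integral_const_mul, lap_exp_eval hlh' (a + δ)]
  have hT3 : |∫ x in Set.Ioi (a + δ), e2 x| ≤ (|φ a| / (h' ^ 2 * δ)) / l ^ 2 := by
    rw [hT3eval, abs_mul, abs_mul, abs_of_pos (Real.exp_pos _),
      abs_of_pos (by positivity : (0:ℝ) < 1 / (l * h'))]
    have hexp : Real.exp (-(l * h' * δ)) ≤ 1 / (l * h' * δ) := lap_exp_le_inv (by positivity)
    calc |φ a| * Real.exp (-(l * h' * δ)) * (1 / (l * h'))
        ≤ |φ a| * (1 / (l * h' * δ)) * (1 / (l * h')) :=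
          mul_le_mul_of_nonneg_right (mul_le_mul_of_nonneg_left hexp (abs_nonneg _)) (by positivity)
    _ = (|φ a| / (h' ^ 2 * δ)) / l ^ 2 := by
          rw [div_div, eq_div_iff (by positivity : (h' ^ 2 * δ) * l ^ 2 ≠ 0)]
          field_simp
  -- T2 : tail of the integral
  have hT2pt : ∀ x ∈ S \ Set.Ioc a (a + δ), ‖f x‖ ≤
      (Real.exp (lam0 * c) * Real.exp (-(l * c))) * ‖φ x * Real.exp (-(lam0 * (h x - h a)))‖ := by
    intro x hx
    have hgx := htail x hx
    have hE : Real.exp (-(l * (h x - h a))) ≤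
        (Real.exp (lam0 * c) * Real.exp (-(l * c))) * Real.exp (-(lam0 * (h x - h a))) := by
      rw [← Real.exp_add, ← Real.exp_add]
      apply Real.exp_le_exp.mpr
      nlinarith [sub_nonneg.mpr hl, sub_nonneg.mpr hgx]
    simp only [hf_def, norm_mul, Real.norm_eq_abs, Real.abs_exp]
    calc |φ x| * Real.exp (-(l * (h x - h a)))
        ≤ |φ x| * ((Real.exp (lam0 * c) * Real.exp (-(l * c))) *
          Real.exp (-(lam0 * (h x - h a)))) := mul_le_mul_of_nonneg_left hE (abs_nonneg _)
    _ = (Real.exp (lam0 * c) * Real.exp (-(l * c))) * (|φ x| * Real.exp (-(lam0 * (h x - h a)))) := by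
        ring
  have hT2 : ‖∫ x in S \ Set.Ioc a (a + δ), f x‖ ≤
      (4 * Real.exp (lam0 * c) * C₀ / c ^ 2) / l ^ 2 := by
    have hdom0 : IntegrableOn (fun x => (Real.exp (lam0 * c) * Real.exp (-(l * c))) *
        ‖φ x * Real.exp (-(lam0 * (h x - h a)))‖) S volume :=
      hI0.norm.const_mul _
    have hdom := hdom0.mono_set (Set.diff_subset (t := Set.Ioc a (a + δ)))
    have hb := norm_integral_le_of_norm_le hdom (by
      filter_upwards [ae_restrict_mem (hSm.diff measurableSet_Ioc)] with x hx
      exact hT2pt x hx)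
    refine hb.trans ?_
    rw [integral_const_mul]
    have hmono : ∫ x in S \ Set.Ioc a (a + δ), ‖φ x * Real.exp (-(lam0 * (h x - h a)))‖ ≤ C₀ := by
      apply setIntegral_mono_set hI0.norm
      · filter_upwards with x; exact norm_nonneg _
      · exact HasSubset.Subset.eventuallyLE Set.diff_subset
    have hnn : (0:ℝ) ≤ Real.exp (lam0 * c) * Real.exp (-(l * c)) := by positivity
    calc Real.exp (lam0 * c) * Real.exp (-(l * c)) *
        ∫ x in S \ Set.Ioc a (a + δ), ‖φ x * Real.exp (-(lam0 * (h x - h a)))‖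
        ≤ Real.exp (lam0 * c) * Real.exp (-(l * c)) * C₀ := mul_le_mul_of_nonneg_left hmono hnn
    _ ≤ Real.exp (lam0 * c) * (4 / (l * c) ^ 2) * C₀ := by
        apply mul_le_mul_of_nonneg_right _ hC₀
        exact mul_le_mul_of_nonneg_left (lap_exp_le (by positivity)) (Real.exp_pos _).le
    _ = (4 * Real.exp (lam0 * c) * C₀ / c ^ 2) / l ^ 2 := by field_simp
  -- assemble
  have hdecomp : (∫ x in S, f x) - φ a / (l * h') =
      (∫ x in Set.Ioc a (a + δ), (f x - e2 x)) + (∫ x in S \ Set.Ioc a (a + δ), f x)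
      - ∫ x in Set.Ioi (a + δ), e2 x := by
    rw [hsplit, hmain, hmainsplit, integral_sub hIl_Ioc he2int_Ioc]; ring
  rw [hdecomp]
  have htriple : ∀ A B C : ℝ, |A + B - C| ≤ |A| + |B| + |C| := by
    intro A B C
    calc |A + B - C| ≤ |A + B| + |C| := abs_sub _ _
    _ ≤ |A| + |B| + |C| := by linarith [abs_add_le A B]
  refine (htriple _ _ _).trans ?_
  have h1 := hT1
  have h2 := hT2
  rw [Real.norm_eq_abs] at h1 h2
  have hsum : (16 * L / h' ^ 2 + 256 * K * |φ a| / h' ^ 3) / l ^ 2 +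
      (4 * Real.exp (lam0 * c) * C₀ / c ^ 2) / l ^ 2 + (|φ a| / (h' ^ 2 * δ)) / l ^ 2 =
      (16 * L / h' ^ 2 + 256 * K * |φ a| / h' ^ 3 + 4 * Real.exp (lam0 * c) * C₀ / c ^ 2 +
        |φ a| / (h' ^ 2 * δ)) / l ^ 2 := by ring
  linarith [h1, h2, hT3]


lemma lap_lip (a ε : ℝ) (hε : 0 < ε) (φ : ℝ → ℝ)
    (hs : ContDiffOn ℝ (⊤ : ℕ∞) φ (Set.Ico a (a + ε))) :
    ∃ L ≥ 0, ∀ x ∈ Set.Icc a (a + ε/2), |φ x - φ a| ≤ L * (x - a) := by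
  set s := Set.Ico a (a + ε) with hs_def
  set t := Set.Icc a (a + ε/2) with ht_def
  have hts : t ⊆ s := Icc_subset_Ico_right (by linarith)
  have husd : UniqueDiffOn ℝ s := uniqueDiffOn_Ico a (a + ε)
  have hdiff : DifferentiableOn ℝ φ s := hs.differentiableOn (by simp)
  have hcont : ContinuousOn (derivWithin φ s) s := hs.continuousOn_derivWithin husd (by simp)
  obtain ⟨L, hL⟩ := isCompact_Icc.exists_bound_of_continuousOn (hcont.mono hts)
  refine ⟨max L 0, le_max_right _ _, fun x hx => ?_⟩
  have key := Convex.norm_image_sub_le_of_norm_hasDerivWithin_le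
    (f := φ) (f' := derivWithin φ s) (s := t) (C := max L 0)
    (fun y hy => ((hdiff y (hts hy)).hasDerivWithinAt).mono hts)
    (fun y hy => (hL y hy).trans (le_max_left _ _)) (convex_Icc _ _)
    (left_mem_Icc.mpr (by linarith)) hx
  have : ‖x - a‖ = x - a := by rw [Real.norm_eq_abs, abs_of_nonneg]; linarith [hx.1]
  calc |φ x - φ a| = ‖φ x - φ a‖ := rfl
  _ ≤ max L 0 * ‖x - a‖ := key
  _ = max L 0 * (x - a) := by rw [this]

lemma lap_taylor (a ε : ℝ) (hε : 0 < ε) (h : ℝ → ℝ)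
    (hs : ContDiffOn ℝ (⊤ : ℕ∞) h (Set.Ico a (a + ε)))
    (h' : ℝ) (hd : HasDerivWithinAt h h' (Set.Ici a) a) :
    ∃ K ≥ 0, ∀ x ∈ Set.Icc a (a + ε/2), |h x - h a - h' * (x - a)| ≤ K * (x - a)^2 := by
  set s := Set.Ico a (a + ε) with hs_def
  set t := Set.Icc a (a + ε/2) with ht_def
  have hts : t ⊆ s := Icc_subset_Ico_right (by linarith)
  have husd : UniqueDiffOn ℝ s := uniqueDiffOn_Ico a (a + ε)
  have hdiff : DifferentiableOn ℝ h s := hs.differentiableOn (by simp)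
  have has : a ∈ s := ⟨le_rfl, by linarith⟩
  have hf'a : derivWithin h s a = h' := by
    have h1 : HasDerivWithinAt h h' s a := hd.mono (fun x hx => hx.1)
    exact h1.derivWithin (husd a has)
  -- second derivative bound
  have hf'C : ContDiffOn ℝ (⊤ : ℕ∞) (derivWithin h s) s := hs.derivWithin husd (by simp)
  have hdiff' : DifferentiableOn ℝ (derivWithin h s) s := hf'C.differentiableOn (by simp)
  have hcont'' : ContinuousOn (derivWithin (derivWithin h s) s) s :=
    hf'C.continuousOn_derivWithin husd (by simp)
  obtain ⟨K, hK⟩ := isCompact_Icc.exists_bound_of_continuousOn (hcont''.mono hts)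
  set K₀ := max K 0 with hK₀_def
  have hK₀ : 0 ≤ K₀ := le_max_right _ _
  refine ⟨K₀, hK₀, fun y hy => ?_⟩
  -- step 1 : |f' x - h'| ≤ K₀ (x - a) on t
  have step1 : ∀ x ∈ t, |derivWithin h s x - h'| ≤ K₀ * (x - a) := by
    intro x hx
    have key := Convex.norm_image_sub_le_of_norm_hasDerivWithin_le
      (f := derivWithin h s) (f' := derivWithin (derivWithin h s) s) (s := t) (C := K₀)
      (fun y hy => ((hdiff' y (hts hy)).hasDerivWithinAt).mono hts)
      (fun y hy => (hK y hy).trans (le_max_left _ _)) (convex_Icc _ _)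
      (left_mem_Icc.mpr (by linarith)) hx
    have hnx : ‖x - a‖ = x - a := by rw [Real.norm_eq_abs, abs_of_nonneg]; linarith [hx.1]
    rw [hf'a] at key
    calc |derivWithin h s x - h'| = ‖derivWithin h s x - h'‖ := rfl
    _ ≤ K₀ * ‖x - a‖ := key
    _ = K₀ * (x - a) := by rw [hnx]
  -- step 2 : apply MVT on Icc a y to ψ
  have hay : a ≤ y := hy.1
  have hys : Set.Icc a y ⊆ t := Icc_subset_Icc le_rfl hy.2
  have key := Convex.norm_image_sub_le_of_norm_hasDerivWithin_le (C := K₀ * (y - a))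
    (f := fun x => h x - (h a + h' * (x - a)))
    (f' := fun x => derivWithin h s x - h') (s := Set.Icc a y)
    (fun x hx => by
      have h1 : HasDerivWithinAt h (derivWithin h s x) (Set.Icc a y) x :=
        ((hdiff x (hts (hys hx))).hasDerivWithinAt).mono (fun z hz => hts (hys hz))
      have h2 : HasDerivAt (fun x : ℝ => h a + h' * (x - a)) h' x := by
        simpa using (((hasDerivAt_id x).sub_const a).const_mul h').const_add (h a)
      exact h1.sub h2.hasDerivWithinAt)
    (fun x hx => by
      have := step1 x (hys hx)
      have h2 : x - a ≤ y - a := by linarith [hx.2]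
      calc ‖derivWithin h s x - h'‖ = |derivWithin h s x - h'| := rfl
      _ ≤ K₀ * (x - a) := this
      _ ≤ K₀ * (y - a) := by nlinarith)
    (convex_Icc _ _) (left_mem_Icc.mpr hay) (right_mem_Icc.mpr hay)
  have hny : ‖y - a‖ = y - a := by rw [Real.norm_eq_abs, abs_of_nonneg]; linarith
  have heq : (h y - (h a + h' * (y - a))) - (h a - (h a + h' * (a - a))) =
      h y - h a - h' * (y - a) := by ring
  rw [heq] at key
  calc |h y - h a - h' * (y - a)| = ‖h y - h a - h' * (y - a)‖ := rfl
  _ ≤ K₀ * (y - a) * ‖y - a‖ := key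
  _ = K₀ * (y - a)^2 := by rw [hny]; ring

end LaplaceAux


/-- Endpoint Laplace approximation with rate, in the case `μ = α = 1`:
`I(λ) = (φ(a)/(λ h'(a))) e^{-λ h(a)} (1 + O(λ⁻¹))`. -/
theorem endpoint_laplace_rate_mu_alpha_one (a : ℝ) (b : EReal) (hab : (a : EReal) < b)
    (h φ : ℝ → ℝ)
    (ε : ℝ) (hε : 0 < ε)
    (hhsmooth : ContDiffOn ℝ (⊤ : ℕ∞) h (Set.Ico a (a + ε)))
    (hφsmooth : ContDiffOn ℝ (⊤ : ℕ∞) φ (Set.Ico a (a + ε)))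
    (hhcont : ∀ x : ℝ, a < x → (x : EReal) < b → ContinuousWithinAt h (Set.Ioi a) x)
    (hφcont : ∀ x : ℝ, a < x → (x : EReal) < b → ContinuousWithinAt φ (Set.Ioi a) x)
    (hgt : ∀ x : ℝ, a < x → (x : EReal) < b → h a < h x)
    (hinf : ∀ δ > 0, ∃ c > 0, ∀ x : ℝ, a + δ ≤ x → (x : EReal) < b → c ≤ h x - h a)
    (h' : ℝ) (hd : HasDerivWithinAt h h' (Set.Ici a) a) (hd_pos : 0 < h')
    (hφa : φ a ≠ 0)
    (lam0 : ℝ)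
    (hint : ∀ l : ℝ, lam0 ≤ l →
      IntegrableOn (fun x => φ x * Real.exp (-l * h x))
        {x : ℝ | a < x ∧ (x : EReal) < b} volume) :
    ∃ M > 0, ∃ lam1 : ℝ, ∀ l : ℝ, lam1 ≤ l →
      |(∫ x in {x : ℝ | a < x ∧ (x : EReal) < b}, φ x * Real.exp (-l * h x)) /
          ((φ a / (l * h')) * Real.exp (-l * h a)) - 1| ≤ M * l⁻¹ := by
  obtain ⟨K, hK, htay⟩ := lap_taylor a ε hε h hhsmooth h' hd
  obtain ⟨L, hL, hlip⟩ := lap_lip a ε hε φ hφsmooth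
  obtain ⟨r, har, hrb⟩ := EReal.exists_between_coe_real hab
  have har' : a < r := by exact_mod_cast har
  set δb : ℝ := r - a with hδb_def
  have hδb : 0 < δb := by simp [hδb_def]; linarith
  have hδbb : ((a + δb : ℝ) : EReal) < b := by
    have : a + δb = r := by rw [hδb_def]; ring
    rw [this]; exact hrb
  set δ : ℝ := min (min (ε/2) δb) (h' / 2 / (K + 1)) with hδ_def
  have hδpos : 0 < δ := lt_min (lt_min (by linarith) hδb) (by positivity)
  have hδε : δ ≤ ε/2 := (min_le_left _ _).trans (min_le_left _ _)
  have hδδb : δ ≤ δb := (min_le_left _ _).trans (min_le_right _ _)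
  have hKδ : K * δ ≤ h' / 2 := by
    have h1 : δ ≤ h' / 2 / (K + 1) := min_le_right _ _
    have h2 : K * δ ≤ K * (h' / 2 / (K + 1)) := mul_le_mul_of_nonneg_left h1 hK
    have h3 : K * (h' / 2 / (K + 1)) ≤ h' / 2 := by
      have hK1 : K / (K + 1) ≤ 1 := by
        rw [div_le_one (by positivity)]; linarith
      calc K * (h' / 2 / (K + 1)) = (h' / 2) * (K / (K + 1)) := by ring
      _ ≤ (h' / 2) * 1 := mul_le_mul_of_nonneg_left hK1 (by linarith)
      _ = h' / 2 := mul_one _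
    linarith
  set S := {x : ℝ | a < x ∧ (x : EReal) < b} with hS_def
  have hSm : MeasurableSet S := by
    have : S = Set.Ioi a ∩ ((↑) : ℝ → EReal) ⁻¹' (Set.Iio b) := by
      ext x; simp [hS_def, Set.mem_Ioi, Set.mem_Iio]
    rw [this]
    exact measurableSet_Ioi.inter
      (continuous_coe_real_ereal.measurable measurableSet_Iio)
  have hS1 : Set.Ioc a (a + δ) ⊆ S := by
    intro x hx
    refine ⟨hx.1, lt_of_le_of_lt ?_ hδbb⟩
    exact_mod_cast (by linarith [hx.2] : x ≤ a + δb)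
  obtain ⟨c, hc, hcb⟩ := hinf δ hδpos
  have htail : ∀ x ∈ S \ Set.Ioc a (a + δ), c ≤ h x - h a := by
    intro x hx
    obtain ⟨⟨hxa, hxb⟩, hnot⟩ := hx
    have hxδ : a + δ ≤ x := by
      by_contra hlt; push_neg at hlt; exact hnot ⟨hxa, le_of_lt hlt⟩
    exact hcb x hxδ hxb
  have htay' : ∀ x ∈ Set.Icc a (a + δ), |h x - h a - h' * (x - a)| ≤ K * (x - a)^2 :=
    fun x hx => htay x ⟨hx.1, by linarith [hx.2]⟩
  have hlip' : ∀ x ∈ Set.Icc a (a + δ), |φ x - φ a| ≤ L * (x - a) :=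
    fun x hx => hlip x ⟨hx.1, by linarith [hx.2]⟩
  obtain ⟨C, hC, hbound⟩ := lap_core a δ hδpos S hSm hS1 h φ h' hd_pos K L hK hL
    htay' hlip' hKδ c hc htail lam0 hint
  have hφa' : 0 < |φ a| := abs_pos.mpr hφa
  refine ⟨(C + 1) * h' / |φ a|, by positivity, max lam0 1, fun l hl => ?_⟩
  have hl0 : lam0 ≤ l := (le_max_left lam0 1).trans hl
  have hl1 : 1 ≤ l := (le_max_right lam0 1).trans hl
  have hlpos : 0 < l := by linarith
  have key := hbound l hl0 hl1
  have hIrw : (∫ x in S, φ x * Real.exp (-l * h x)) =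
      Real.exp (-(l * h a)) * ∫ x in S, φ x * Real.exp (-(l * (h x - h a))) := by
    rw [← integral_const_mul]
    apply setIntegral_congr_fun hSm
    intro x _
    show φ x * Real.exp (-l * h x) =
      Real.exp (-(l * h a)) * (φ x * Real.exp (-(l * (h x - h a))))
    have hexp : Real.exp (-(l * h a)) * Real.exp (-(l * (h x - h a))) =
        Real.exp (-l * h x) := by rw [← Real.exp_add]; ring_nf
    rw [← hexp]; ring
  set P : ℝ := ∫ x in S, φ x * Real.exp (-(l * (h x - h a))) with hP_def
  have hlh : 0 < l * h' := by positivity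
  have hexpne : Real.exp (-l * h a) ≠ 0 := (Real.exp_pos _).ne'
  have hexpeq : Real.exp (-l * h a) = Real.exp (-(l * h a)) := by ring_nf
  have hratio : (∫ x in S, φ x * Real.exp (-l * h x)) /
      ((φ a / (l * h')) * Real.exp (-l * h a)) - 1
      = (P - φ a / (l * h')) * ((l * h') / φ a) := by
    rw [hIrw, hexpeq]
    field_simp
  rw [hratio, abs_mul]
  have habs2 : |(l * h') / φ a| = (l * h') / |φ a| := by
    rw [abs_div, abs_of_pos hlh]
  rw [habs2]
  calc |P - φ a / (l * h')| * ((l * h') / |φ a|)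
      ≤ (C / l^2) * ((l * h') / |φ a|) :=
        mul_le_mul_of_nonneg_right key (by positivity)
  _ = (C * h' / |φ a|) * l⁻¹ := by field_simp
  _ ≤ ((C + 1) * h' / |φ a|) * l⁻¹ := by
      gcongr
      linarith
end

section
/- Let n ≥ 2, μ_1,…,μ_n ∈ ℝ, σ_1,…,σ_n > 0, and let X_1,…,X_n be independent random variables with X_i ~ N(μ_i, σ_i²). For x > 1 set a_x := x^{1/n}/log x and b_x := x^{1/n} (log x)^{1/(n−1)}. Then for all x large enough that b_x ≥ max_j |μ_j|, P( ∏_{j=1}^n X_j ≥ x and |X_i| ≤ a_x for some i ) ≤ Σ_{j=1}^n [ exp(−(b_x−μ_j)²/(2σ_j²)) + exp(−(b_x+μ_j)²/(2σ_j²)) ]. -/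
/-!
If all `|X_j|` are below `b_x` while one of them is at most `a_x`, the product is below
`a_x * b_x ^ (n - 1) = x`. Hence the event lies in `⋃ j, {b_x ≤ |X_j|}`, and the union bound
finishes the proof once each `X_j - μ_j`, being sub-Gaussian with parameter `σ_j²`, is fed to the
Chernoff bound on both tails at the nonnegative levels `b_x ∓ μ_j`.
-/

open MeasureTheory ProbabilityTheory Finset Real
open scoped NNReal

lemma hasSubgaussianMGF_id_gaussianReal (v : ℝ≥0) :
    HasSubgaussianMGF id v (gaussianReal 0 v) where
  integrable_exp_mul := integrable_exp_mul_gaussianReal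
  mgf_le t := by simp [mgf_id_gaussianReal]

namespace ProbabilityTheory.HasLaw

variable {Ω : Type*} [MeasurableSpace Ω] {P : Measure Ω} {X : Ω → ℝ} {m : ℝ} {v : ℝ≥0}

lemma hasSubgaussianMGF_sub_of_gaussianReal (hX : HasLaw X (gaussianReal m v) P) :
    HasSubgaussianMGF (fun ω ↦ X ω - m) v P := by
  have hcentered := gaussianReal_sub_const hX m
  rw [sub_self] at hcentered
  rw [← HasSubgaussianMGF.id_map_iff hcentered.aemeasurable, hcentered.map_eq]
  exact hasSubgaussianMGF_id_gaussianReal v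

lemma measureReal_abs_ge_le_of_gaussianReal (hX : HasLaw X (gaussianReal m v) P)
    {b : ℝ} (hb : |m| ≤ b) :
    P.real {ω | b ≤ |X ω|} ≤ exp (-(b - m) ^ 2 / (2 * v)) + exp (-(b + m) ^ 2 / (2 * v)) := by
  have : IsFiniteMeasure P := hX.isFiniteMeasure
  have h := hX.hasSubgaussianMGF_sub_of_gaussianReal
  have hsplit : {ω | b ≤ |X ω|} ⊆ {ω | b - m ≤ X ω - m} ∪ {ω | b + m ≤ -(X ω - m)} := by
    intro ω (hω : b ≤ |X ω|)
    rcases le_abs'.mp hω with hlow | hup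
    · exact Or.inr (show b + m ≤ -(X ω - m) by linarith)
    · exact Or.inl (show b - m ≤ X ω - m by linarith)
  obtain ⟨hm_le, hm_ge⟩ := abs_le.mp hb
  calc P.real {ω | b ≤ |X ω|}
      ≤ P.real {ω | b - m ≤ X ω - m} + P.real {ω | b + m ≤ -(X ω - m)} :=
        (measureReal_mono hsplit).trans (measureReal_union_le _ _)
    _ ≤ _ := add_le_add (h.measure_ge_le (by linarith)) (h.neg.measure_ge_le (by linarith))

end ProbabilityTheory.HasLaw

lemma prod_lt_pow_card_of_nonneg {ι : Type*} {s : Finset ι} (hs : s.Nonempty) {f : ι → ℝ}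
    {b : ℝ} (h0 : ∀ j ∈ s, 0 ≤ f j) (hlt : ∀ j ∈ s, f j < b) : ∏ j ∈ s, f j < b ^ #s := by
  by_cases hzero : ∃ j ∈ s, f j = 0
  · obtain ⟨j, hj, hfj⟩ := hzero
    rw [prod_eq_zero hj hfj]
    exact pow_pos ((h0 j hj).trans_lt (hlt j hj)) _
  · push Not at hzero
    simpa using prod_lt_prod_of_nonempty (fun j hj ↦ (h0 j hj).lt_of_ne' (hzero j hj)) hlt hs

lemma prod_lt_mul_pow_of_abs_le {ι : Type*} [Fintype ι] (hι : 2 ≤ Fintype.card ι)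
    (y : ι → ℝ) {a b : ℝ} (ha : 0 < a) {i : ι} (hi : |y i| ≤ a) (hlt : ∀ j, |y j| < b) :
    ∏ j, y j < a * b ^ (Fintype.card ι - 1) := by
  classical
  have hrest : (univ.erase i).Nonempty := by
    rw [← card_pos, card_erase_of_mem (mem_univ i), card_univ]
    omega
  have hrest_lt : ∏ j ∈ univ.erase i, |y j| < b ^ (Fintype.card ι - 1) := by
    simpa [card_erase_of_mem] using
      prod_lt_pow_card_of_nonneg hrest (fun j _ ↦ abs_nonneg (y j)) (fun j _ ↦ hlt j)
  calc ∏ j, y j ≤ ∏ j, |y j| := (le_abs_self _).trans (abs_prod _ _).le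
    _ = |y i| * ∏ j ∈ univ.erase i, |y j| := (mul_prod_erase _ _ (mem_univ i)).symm
    _ ≤ a * ∏ j ∈ univ.erase i, |y j| := by gcongr
    _ < a * b ^ (Fintype.card ι - 1) := by gcongr

lemma rpow_one_div_div_mul_pow_eq {x L : ℝ} (hx : 0 ≤ x) (hL : 0 < L) {n : ℕ} (hn : 2 ≤ n) :
    x ^ ((1 : ℝ) / n) / L * (x ^ ((1 : ℝ) / n) * L ^ ((1 : ℝ) / (n - 1))) ^ (n - 1) = x := by
  have hroot : (x ^ ((1 : ℝ) / n)) ^ n = x := by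
    rw [one_div]; exact rpow_inv_natCast_pow hx (by omega)
  have hLroot : (L ^ ((1 : ℝ) / (n - 1))) ^ (n - 1) = L := by
    have hcast : ((n - 1 : ℕ) : ℝ) = (n : ℝ) - 1 := by rw [Nat.cast_sub (by omega), Nat.cast_one]
    rw [one_div, ← hcast]; exact rpow_inv_natCast_pow hL.le (by omega)
  rw [mul_pow, hLroot]
  calc _ = x ^ ((1 : ℝ) / n) * (x ^ ((1 : ℝ) / n)) ^ (n - 1) * (L / L) := by ring
    _ = x := by rw [div_self hL.ne', mul_one, ← pow_succ', Nat.sub_add_cancel (by omega), hroot]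

theorem unbalanced_region_bound_general
    {Ω : Type*} [MeasureSpace Ω] [IsProbabilityMeasure (ℙ : Measure Ω)]
    (n : ℕ) (hn : 2 ≤ n) (μ σ : Fin n → ℝ)
    (X : Fin n → Ω → ℝ)
    (hlaw : ∀ i, Measure.map (X i) ℙ = gaussianReal (μ i) (Real.toNNReal (σ i ^ 2)))
    (x : ℝ) (hx : 1 < x)
    (hbx : ∀ j, |μ j| ≤ x ^ ((1 : ℝ) / n) * Real.log x ^ ((1 : ℝ) / (n - 1))) :
    (ℙ {ω | x ≤ ∏ j, X j ω ∧ ∃ i, |X i ω| ≤ x ^ ((1 : ℝ) / n) / Real.log x}).toReal ≤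
      ∑ j, (Real.exp (-(x ^ ((1 : ℝ) / n) * Real.log x ^ ((1 : ℝ) / (n - 1)) - μ j) ^ 2 /
              (2 * σ j ^ 2)) +
            Real.exp (-(x ^ ((1 : ℝ) / n) * Real.log x ^ ((1 : ℝ) / (n - 1)) + μ j) ^ 2 /
              (2 * σ j ^ 2))) := by
  set a := x ^ ((1 : ℝ) / n) / Real.log x
  set b := x ^ ((1 : ℝ) / n) * Real.log x ^ ((1 : ℝ) / (n - 1))
  have ha : 0 < a := div_pos (rpow_pos_of_pos (by linarith) _) (log_pos hx)
  have hab : a * b ^ (n - 1) = x := rpow_one_div_div_mul_pow_eq (by linarith) (log_pos hx) hn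
  have hsub : {ω | x ≤ ∏ j, X j ω ∧ ∃ i, |X i ω| ≤ a} ⊆ ⋃ j, {ω | b ≤ |X j ω|} := by
    rintro ω ⟨hprod, i, hi⟩
    by_contra hnot
    simp only [Set.mem_iUnion, Set.mem_ofPred_eq, not_exists, not_le] at hnot
    have := prod_lt_mul_pow_of_abs_le (by rwa [Fintype.card_fin]) (X · ω) ha hi hnot
    rw [Fintype.card_fin, hab] at this
    linarith
  have hX : ∀ j, HasLaw (X j) (gaussianReal (μ j) (σ j ^ 2).toNNReal) ℙ := fun j ↦
    ⟨aemeasurable_of_map_neZero (by rw [hlaw j]; infer_instance), hlaw j⟩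
  calc Measure.real ℙ {ω | x ≤ ∏ j, X j ω ∧ ∃ i, |X i ω| ≤ a}
      ≤ Measure.real ℙ (⋃ j, {ω | b ≤ |X j ω|}) := measureReal_mono hsub
    _ ≤ ∑ j, Measure.real ℙ {ω | b ≤ |X j ω|} := measureReal_iUnion_fintype_le _
    _ ≤ _ := sum_le_sum fun j _ ↦ by
        simpa [Real.coe_toNNReal _ (sq_nonneg (σ j))] using
          (hX j).measureReal_abs_ge_le_of_gaussianReal (hbx j)

/-- Union bound for the unbalanced region: the probability that the product exceeds `x`
while some coordinate is at most `a_x = x^{1/n}/log x` is bounded by the sum of two-sided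
Gaussian tail bounds at level `b_x = x^{1/n} (log x)^{1/(n-1)}`. -/
theorem unbalanced_region_bound
    {Ω : Type*} [MeasureSpace Ω] [IsProbabilityMeasure (ℙ : Measure Ω)]
    (n : ℕ) (hn : 2 ≤ n) (μ σ : Fin n → ℝ) (hσ : ∀ i, 0 < σ i)
    (X : Fin n → Ω → ℝ)
    (hindep : iIndepFun X ℙ)
    (hlaw : ∀ i, Measure.map (X i) ℙ = gaussianReal (μ i) (Real.toNNReal (σ i ^ 2)))
    (x : ℝ) (hx : 1 < x)
    (hbx : ∀ j, |μ j| ≤ x ^ ((1 : ℝ) / n) * Real.log x ^ ((1 : ℝ) / (n - 1))) :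
    (ℙ {ω | x ≤ ∏ j, X j ω ∧ ∃ i, |X i ω| ≤ x ^ ((1 : ℝ) / n) / Real.log x}).toReal ≤
      ∑ j, (Real.exp (-(x ^ ((1 : ℝ) / n) * Real.log x ^ ((1 : ℝ) / (n - 1)) - μ j) ^ 2 /
              (2 * σ j ^ 2)) +
            Real.exp (-(x ^ ((1 : ℝ) / n) * Real.log x ^ ((1 : ℝ) / (n - 1)) + μ j) ^ 2 /
              (2 * σ j ^ 2))) :=
  unbalanced_region_bound_general n hn μ σ X hlaw x hx hbx
end

section
/- Let n ≥ 2, μ_1,…,μ_n ∈ ℝ, σ_1,…,σ_n > 0, and let X_1,…,X_n be independent random variables with X_i ~ N(μ_i, σ_i²). For x > 1 set a_x := x^{1/n}/log x, and define I_2(x) := P( ∏_{j=1}^n X_j ≥ x and |X_i| ≤ a_x for some i ) and I_1(x) := P( ∏_{j=1}^n X_j ≥ x and |X_i| > a_x for all i ). Then I_1(x) > 0 for all sufficiently large x, and I_2(x)/I_1(x) → 0 as x → ∞. -/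
/-!
Put `T = x^(1/n)`, `a = T / log x` and `B = T (log x)^(1/(n-1))`, chosen so that `a B^(n-1) = x`.
The balanced event contains `{X_i ≥ T for all i}`, whose probability is, by independence and the
lower Gaussian tail bound `P(X_i ≥ s) ≥ φ_i(s + 1)` (`φ_i` the density of `X_i`), at least
`c exp(-κ T²)`. On the unbalanced event one factor has `|X_i| ≤ a`, so the product can only reach
`x` if some `|X_j| ≥ B`; by the Chernoff bound this has probability `O(exp(-B² / (8 max σ_i²)))`.
Since `B / T → ∞`, the ratio tends to `0`.
-/

open MeasureTheory ProbabilityTheory Finset Filter Real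
open scoped Topology NNReal

section Gaussian

variable {Ω : Type*} {mΩ : MeasurableSpace Ω} {P : Measure Ω} {m : ℝ} {v : ℝ≥0}

lemma hasSubgaussianMGF_sub_gaussianReal (m : ℝ) (v : ℝ≥0) :
    HasSubgaussianMGF (fun y => y - m) v (gaussianReal m v) := by
  have hmap : (gaussianReal m v).map (fun y => y - m) = gaussianReal 0 v := by
    rw [gaussianReal_map_sub_const, sub_self]
  refine ⟨fun t => mgf_pos_iff.1 ?_, fun t => ?_⟩ <;> simp [mgf_gaussianReal hmap, exp_pos]

lemma ProbabilityTheory.HasSubgaussianMGF.measure_abs_ge_le {X : Ω → ℝ} {c : ℝ≥0}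
    (h : HasSubgaussianMGF X c P) {ε : ℝ} (hε : 0 ≤ ε) :
    P.real {ω | ε ≤ |X ω|} ≤ 2 * exp (-ε ^ 2 / (2 * c)) := by
  have hsplit : {ω | ε ≤ |X ω|} = {ω | ε ≤ X ω} ∪ {ω | ε ≤ (-X) ω} := by
    ext ω
    simp [le_abs]
  calc P.real {ω | ε ≤ |X ω|} ≤ P.real {ω | ε ≤ X ω} + P.real {ω | ε ≤ (-X) ω} :=
        hsplit ▸ measureReal_union_le _ _
    _ ≤ exp (-ε ^ 2 / (2 * c)) + exp (-ε ^ 2 / (2 * c)) :=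
        add_le_add (h.measure_ge_le hε) (h.neg.measure_ge_le hε)
    _ = 2 * exp (-ε ^ 2 / (2 * c)) := by ring

lemma eventually_gaussianReal_abs_ge_le (m : ℝ) (v : ℝ≥0) :
    ∀ᶠ s in atTop, (gaussianReal m v).real {y | s ≤ |y|} ≤ 2 * exp (-s ^ 2 / (8 * v)) := by
  filter_upwards [eventually_ge_atTop (2 * |m|)] with s hs
  have hs' : 0 ≤ s / 2 := by linarith [abs_nonneg m]
  calc (gaussianReal m v).real {y | s ≤ |y|}
      ≤ (gaussianReal m v).real {y | s / 2 ≤ |y - m|} :=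
        measureReal_mono fun y (hy : s ≤ |y|) => show s / 2 ≤ |y - m| by
          linarith [abs_sub_abs_le_abs_sub y m]
    _ ≤ 2 * exp (-(s / 2) ^ 2 / (2 * v)) :=
        (hasSubgaussianMGF_sub_gaussianReal m v).measure_abs_ge_le hs'
    _ = 2 * exp (-s ^ 2 / (8 * v)) := by ring_nf

lemma gaussianPDFReal_antitoneOn (m : ℝ) (v : ℝ≥0) :
    AntitoneOn (gaussianPDFReal m v) (Set.Ici m) := by
  intro y (hy : m ≤ y) z (hz : m ≤ z) hyz
  unfold gaussianPDFReal
  gcongr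

lemma gaussianPDFReal_add_one_le_gaussianReal_Ici (hv : v ≠ 0) {s : ℝ} (hs : m ≤ s) :
    gaussianPDFReal m v (s + 1) ≤ (gaussianReal m v).real (Set.Ici s) := by
  calc gaussianPDFReal m v (s + 1)
      = volume.real (Set.Icc s (s + 1)) • gaussianPDFReal m v (s + 1) := by simp
    _ ≤ ∫ y in Set.Icc s (s + 1), gaussianPDFReal m v y :=
        setIntegral_ge_of_const_le measurableSet_Icc (by simp)
          (fun y hy => gaussianPDFReal_antitoneOn m v (hs.trans hy.1) (by simp; linarith) hy.2)
          (integrable_gaussianPDFReal m v).integrableOn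
    _ = (gaussianReal m v).real (Set.Icc s (s + 1)) := by
        rw [measureReal_def, gaussianReal_apply_eq_integral m hv, ENNReal.toReal_ofReal
          (setIntegral_nonneg measurableSet_Icc fun y _ => gaussianPDFReal_nonneg m v y)]
    _ ≤ (gaussianReal m v).real (Set.Ici s) := measureReal_mono Set.Icc_subset_Ici_self

lemma eventually_exp_le_gaussianReal_Ici (m : ℝ) (hv : v ≠ 0) :
    ∀ᶠ s in atTop,
      (√(2 * π * v))⁻¹ * exp (-(2 / v) * s ^ 2) ≤ (gaussianReal m v).real (Set.Ici s) := by
  filter_upwards [eventually_ge_atTop (|m| + 1)] with s hs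
  have hm := le_abs_self m
  have hm' := neg_le_abs m
  refine le_trans ?_ (gaussianPDFReal_add_one_le_gaussianReal_Ici hv (by linarith))
  have hsq : (s + 1 - m) ^ 2 ≤ (2 * s) ^ 2 := pow_le_pow_left₀ (by linarith) (by linarith) 2
  have hv' : (0 : ℝ) < v := by positivity
  unfold gaussianPDFReal
  gcongr
  rw [neg_mul, neg_div, neg_le_neg_iff, div_le_iff₀ (by positivity)]
  calc (s + 1 - m) ^ 2 ≤ (2 * s) ^ 2 := hsq
    _ = 2 / v * s ^ 2 * (2 * v) := by field_simp

end Gaussian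

section Product

variable {Ω ι : Type*} {mΩ : MeasurableSpace Ω} {P : Measure Ω} [Fintype ι]
  {X : ι → Ω → ℝ} {m : ι → ℝ} {v : ι → ℝ≥0}

lemma exists_pos_eventually_exp_le_measureReal_forall_le
    (hX : ∀ i, HasLaw (X i) (gaussianReal (m i) (v i)) P) (hindep : iIndepFun X P)
    (hv : ∀ i, v i ≠ 0) :
    ∃ c > 0, ∃ κ, ∀ᶠ t in atTop, c * exp (-κ * t ^ 2) ≤ P.real {ω | ∀ i, t ≤ X i ω} := by
  refine ⟨∏ i, (√(2 * π * v i))⁻¹, prod_pos fun i _ => ?_, ∑ i, 2 / (v i : ℝ), ?_⟩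
  · have : (0 : ℝ) < v i := by simpa [pos_iff_ne_zero] using hv i
    positivity
  filter_upwards [eventually_all.2 fun i => eventually_exp_le_gaussianReal_Ici (m i) (hv i)]
    with t ht
  have hjoint : P.real {ω | ∀ i, t ≤ X i ω} = ∏ i, (gaussianReal (m i) (v i)).real (Set.Ici t) := by
    rw [measureReal_def, Set.ofPred_forall, hindep.meas_iInter (s := fun i => {ω | t ≤ X i ω})
      fun i => ⟨Set.Ici t, measurableSet_Ici, rfl⟩, ENNReal.toReal_prod]
    exact prod_congr rfl fun i _ => (hX i).measureReal_eq (p := fun y => t ≤ y) measurableSet_Ici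
  have hexp : exp (-(∑ i, 2 / (v i : ℝ)) * t ^ 2) = ∏ i, exp (-(2 / v i) * t ^ 2) := by
    rw [← exp_sum, ← sum_neg_distrib, sum_mul]
  rw [hjoint, hexp, ← prod_mul_distrib]
  exact prod_le_prod (fun i _ => by positivity) fun i _ => ht i

lemma eventually_measureReal_exists_abs_ge_le
    (hX : ∀ i, HasLaw (X i) (gaussianReal (m i) (v i)) P) :
    ∀ᶠ b in atTop, P.real {ω | ∃ i, b ≤ |X i ω|} ≤ ∑ i, 2 * exp (-b ^ 2 / (8 * v i)) := by
  filter_upwards [eventually_all.2 fun i => eventually_gaussianReal_abs_ge_le (m i) (v i)]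
    with b hb
  calc P.real {ω | ∃ i, b ≤ |X i ω|} = P.real (⋃ i, {ω | b ≤ |X i ω|}) := by rw [Set.ofPred_exists]
    _ ≤ ∑ i, P.real {ω | b ≤ |X i ω|} := measureReal_iUnion_fintype_le _
    _ ≤ ∑ i, 2 * exp (-b ^ 2 / (8 * v i)) := sum_le_sum fun i _ =>
        ((hX i).measureReal_eq (p := fun y => b ≤ |y|)
          (measurableSet_le measurable_const measurable_abs)).trans_le (hb i)

end Product

lemma exists_le_abs_of_le_prod {ι : Type*} [Fintype ι] {y : ι → ℝ} {x a b : ℝ}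
    (hι : 2 ≤ Fintype.card ι) (hx : 0 < x) (hxy : x ≤ ∏ j, y j) {i : ι} (hi : |y i| ≤ a)
    (hab : a * b ^ (Fintype.card ι - 1) ≤ x) : ∃ j, b ≤ |y j| := by
  classical
  by_contra! hlt
  have hprod : x ≤ ∏ j, |y j| := hxy.trans ((le_abs_self _).trans (abs_prod _ _).le)
  have hy : ∀ j, 0 < |y j| := fun j => abs_pos.2 fun h0 => by
    rw [prod_eq_zero (mem_univ j) (by simp [h0])] at hprod; linarith
  have hrest : ∏ j ∈ univ.erase i, |y j| < b ^ (Fintype.card ι - 1) := by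
    have hne : (univ.erase i).Nonempty := by
      rw [← card_pos, card_erase_of_mem (mem_univ i), card_univ]; omega
    simpa [card_erase_of_mem (mem_univ i)] using
      prod_lt_prod_of_nonempty (fun j _ => hy j) (fun j _ => hlt j) hne
  have := calc x ≤ ∏ j, |y j| := hprod
    _ = |y i| * ∏ j ∈ univ.erase i, |y j| := (mul_prod_erase _ _ (mem_univ i)).symm
    _ < a * b ^ (Fintype.card ι - 1) :=
        mul_lt_mul' hi hrest (prod_nonneg fun j _ => abs_nonneg _) ((hy i).trans_le hi)
  linarith

lemma le_prod_and_lt_abs_of_rpow_le {n : ℕ} (hn : n ≠ 0) {x : ℝ} (hx : exp 1 < x)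
    {y : Fin n → ℝ} (hy : ∀ i, x ^ ((1 : ℝ) / n) ≤ y i) :
    x ≤ ∏ j, y j ∧ ∀ i, x ^ ((1 : ℝ) / n) / log x < |y i| := by
  have hx0 : 0 < x := (exp_pos 1).trans hx
  have hT : 0 < x ^ ((1 : ℝ) / n) := rpow_pos_of_pos hx0 _
  refine ⟨?_, fun i => ?_⟩
  · calc x = ∏ _j : Fin n, x ^ ((1 : ℝ) / n) := by
          rw [prod_const, card_univ, Fintype.card_fin, one_div, rpow_inv_natCast_pow hx0.le hn]
      _ ≤ ∏ j, y j := prod_le_prod (fun _ _ => hT.le) fun j _ => hy j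
  · calc x ^ ((1 : ℝ) / n) / log x < x ^ ((1 : ℝ) / n) :=
          div_lt_self hT ((lt_log_iff_exp_lt hx0).2 hx)
      _ ≤ |y i| := (hy i).trans (le_abs_self _)

lemma exists_rpow_mul_log_rpow_le_abs {n : ℕ} (hn : 2 ≤ n) {x : ℝ} (hx : 1 < x)
    {y : Fin n → ℝ} (hxy : x ≤ ∏ j, y j) {i : Fin n} (hi : |y i| ≤ x ^ ((1 : ℝ) / n) / log x) :
    ∃ j, x ^ ((1 : ℝ) / n) * log x ^ ((1 : ℝ) / (n - 1 : ℕ)) ≤ |y j| := by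
  have hlog : 0 < log x := log_pos hx
  have hT : (x ^ ((1 : ℝ) / n)) ^ n = x := by
    rw [one_div, rpow_inv_natCast_pow (by linarith) (by omega)]
  have hL : (log x ^ ((1 : ℝ) / (n - 1 : ℕ))) ^ (n - 1) = log x := by
    rw [one_div, rpow_inv_natCast_pow hlog.le (by omega)]
  refine exists_le_abs_of_le_prod (by simpa using hn) (by linarith) hxy hi (le_of_eq ?_)
  rw [Fintype.card_fin, mul_pow, hL]
  calc _ = (x ^ ((1 : ℝ) / n)) ^ (n - 1 + 1) * (log x / log x) := by ring
    _ = x := by rw [Nat.sub_add_cancel (by omega), hT, div_self hlog.ne', mul_one]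

lemma tendsto_mul_exp_div_mul_exp_sq_zero {α : Type*} {l : Filter α} {T L : α → ℝ}
    (hT : Tendsto T l atTop) (hL : Tendsto L l atTop) (C c κ : ℝ) {k : ℝ} (hk : 0 < k) :
    Tendsto (fun t => C * exp (-(T t * L t) ^ 2 / k) / (c * exp (-κ * T t ^ 2))) l (𝓝 0) := by
  have hexponent : Tendsto (fun t => T t ^ 2 * (κ + -(L t ^ 2 / k))) l atBot :=
    ((tendsto_pow_atTop two_ne_zero).comp hT).atTop_mul_atBot₀ <|
      tendsto_atBot_add_const_left _ κ <| tendsto_neg_atTop_atBot.comp <|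
        ((tendsto_pow_atTop two_ne_zero).comp hL).atTop_div_const hk
  have := (tendsto_exp_atBot.comp hexponent).const_mul (C / c)
  rw [mul_zero] at this
  refine this.congr fun t => ?_
  rw [Function.comp_apply, mul_div_mul_comm, ← exp_sub]
  congr 2
  ring

/-- The unbalanced part of the tail is negligible: the balanced probability `I₁(x)` is
eventually positive and `I₂(x)/I₁(x) → 0` as `x → ∞`. -/
theorem unbalanced_over_balanced_tendsto_zero
    {Ω : Type*} [MeasureSpace Ω] [IsProbabilityMeasure (ℙ : Measure Ω)]
    (n : ℕ) (hn : 2 ≤ n) (μ σ : Fin n → ℝ) (hσ : ∀ i, 0 < σ i)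
    (X : Fin n → Ω → ℝ)
    (hindep : iIndepFun X ℙ)
    (hlaw : ∀ i, Measure.map (X i) ℙ = gaussianReal (μ i) (Real.toNNReal (σ i ^ 2))) :
    (∃ x₀ : ℝ, ∀ x ≥ x₀,
      0 < (ℙ {ω | x ≤ ∏ j, X j ω ∧
            ∀ i, x ^ ((1 : ℝ) / n) / Real.log x < |X i ω|}).toReal)
    ∧ Tendsto (fun x : ℝ =>
        (ℙ {ω | x ≤ ∏ j, X j ω ∧
            ∃ i, |X i ω| ≤ x ^ ((1 : ℝ) / n) / Real.log x}).toReal /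
        (ℙ {ω | x ≤ ∏ j, X j ω ∧
            ∀ i, x ^ ((1 : ℝ) / n) / Real.log x < |X i ω|}).toReal)
      atTop (𝓝 0) := by
  set v : Fin n → ℝ≥0 := fun i => (σ i ^ 2).toNNReal
  have hv : ∀ i, (0 : ℝ) < v i := fun i => by simpa [v] using (hσ i).ne'
  have hX : ∀ i, HasLaw (X i) (gaussianReal (μ i) (v i)) :=
    fun i => ⟨aemeasurable_of_map_neZero (by rw [hlaw i]; infer_instance), hlaw i⟩
  have hT : Tendsto (fun x : ℝ => x ^ ((1 : ℝ) / n)) atTop atTop :=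
    tendsto_rpow_atTop (one_div_pos.2 (Nat.cast_pos.2 (by omega)))
  have hL : Tendsto (fun x : ℝ => log x ^ ((1 : ℝ) / (n - 1 : ℕ))) atTop atTop :=
    (tendsto_rpow_atTop (one_div_pos.2 (Nat.cast_pos.2 (by omega)))).comp tendsto_log_atTop
  obtain ⟨c, hc, κ, hlower⟩ := exists_pos_eventually_exp_le_measureReal_forall_le hX hindep
    fun i => NNReal.coe_ne_zero.1 (hv i).ne'
  have hI₁ : ∀ᶠ x in atTop, c * exp (-κ * (x ^ ((1 : ℝ) / n)) ^ 2) ≤ (ℙ {ω | x ≤ ∏ j, X j ω ∧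
      ∀ i, x ^ ((1 : ℝ) / n) / Real.log x < |X i ω|}).toReal := by
    filter_upwards [hT.eventually hlower, eventually_gt_atTop (exp 1)] with x hbound hx
    exact hbound.trans (measureReal_mono fun ω => le_prod_and_lt_abs_of_rpow_le (by omega) hx)
  have hI₂ : ∀ᶠ x in atTop, (ℙ {ω | x ≤ ∏ j, X j ω ∧
      ∃ i, |X i ω| ≤ x ^ ((1 : ℝ) / n) / Real.log x}).toReal ≤
      ∑ i, 2 * exp (-(x ^ ((1 : ℝ) / n) * log x ^ ((1 : ℝ) / (n - 1 : ℕ))) ^ 2 / (8 * v i)) := by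
    filter_upwards [(hT.atTop_mul_atTop₀ hL).eventually
      (eventually_measureReal_exists_abs_ge_le hX), eventually_gt_atTop 1] with x hbound hx
    refine (measureReal_mono ?_).trans hbound
    rintro ω ⟨hxy, _, hi⟩
    exact exists_rpow_mul_log_rpow_le_abs hn hx hxy hi
  refine ⟨?_, ?_⟩
  · obtain ⟨x₀, h⟩ := eventually_atTop.1 hI₁
    exact ⟨x₀, fun x hx => (mul_pos hc (exp_pos _)).trans_le (h x hx)⟩
  · refine squeeze_zero' (.of_forall fun _ => by positivity) ((hI₁.and hI₂).mono fun x h =>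
      div_le_div₀ (by positivity) h.2 (by positivity) h.1) ?_
    simpa [sum_div] using tendsto_finsetSum univ fun i _ =>
      tendsto_mul_exp_div_mul_exp_sq_zero hT hL 2 c κ (mul_pos (by norm_num) (hv i))
end

section
/- Let n ≥ 2, μ_1,…,μ_n ∈ ℝ, σ_1,…,σ_n > 0. Define Ψ(u) := Σ_{i=1}^n ( u_i²/(2σ_i²) − μ_i u_i/σ_i² ) for u ∈ ℝ^n, r(x) := (x/∏_{j=1}^n σ_j)^{1/n}, u_{0,i}(x) := σ_i r(x), and δ_x := (1/(2n)) (∏_{k=1}^n σ_k / x)^{(n−1)/n}. Then there exist K > 0 and x_0 such that for all x ≥ x_0 and all u ∈ ℝ^n with u_{0,i}(x) < u_i ≤ u_{0,i}(x) + σ_i δ_x for every i, one has Ψ(u) ≤ Ψ(u_0(x)) + K. -/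
open Finset

/-- The quadratic exponent from the joint Gaussian density. -/
noncomputable def PsiExp {n : ℕ} (μ σ : Fin n → ℝ) (u : Fin n → ℝ) : ℝ :=
  ∑ i, (u i ^ 2 / (2 * σ i ^ 2) - μ i * u i / σ i ^ 2)

/-- The balanced scale `r(x) = (x / ∏ σ_j)^{1/n}`. -/
noncomputable def rbal (n : ℕ) (σ : Fin n → ℝ) (x : ℝ) : ℝ :=
  (x / ∏ j, σ j) ^ ((1 : ℝ) / n)

lemma per_term_bound (σ μ r δ u : ℝ) (hσ : 0 < σ) (hr : 0 ≤ r) (hδ0 : 0 ≤ δ)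
    (hδ1 : δ ≤ 1) (hrδ : r * δ ≤ 1) (h1 : σ * r < u) (h2 : u ≤ σ * r + σ * δ) :
    u ^ 2 / (2 * σ ^ 2) - μ * u / σ ^ 2 ≤
      (σ * r) ^ 2 / (2 * σ ^ 2) - μ * (σ * r) / σ ^ 2 + (2 + |μ| / σ) := by
  have hσ2 : (0 : ℝ) < σ ^ 2 := by positivity
  have hu0 : 0 ≤ u := le_of_lt (lt_of_le_of_lt (mul_nonneg hσ.le hr) h1)
  have hu2 : u ^ 2 ≤ (σ * r) ^ 2 + 4 * σ ^ 2 := by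
    nlinarith [mul_le_mul h2 h2 hu0 (by positivity : (0:ℝ) ≤ σ * r + σ * δ),
      mul_le_mul_of_nonneg_left hrδ (sq_nonneg σ),
      mul_le_mul_of_nonneg_left (mul_le_one₀ hδ1 hδ0 hδ1) (sq_nonneg σ)]
  have hA : u ^ 2 / (2 * σ ^ 2) ≤ (σ * r) ^ 2 / (2 * σ ^ 2) + 2 := by
    calc u ^ 2 / (2 * σ ^ 2) ≤ ((σ * r) ^ 2 + 4 * σ ^ 2) / (2 * σ ^ 2) := by gcongr
      _ = (σ * r) ^ 2 / (2 * σ ^ 2) + 2 := by field_simp; ring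
  have hB : μ * (σ * r) / σ ^ 2 - μ * u / σ ^ 2 ≤ |μ| / σ := by
    rw [div_sub_div_same, div_le_div_iff₀ hσ2 hσ]
    rcases abs_cases μ with ⟨he, hm⟩ | ⟨he, hm⟩ <;> rw [he]
    · nlinarith [mul_nonneg (mul_nonneg hm (sub_nonneg.mpr h1.le)) hσ.le,
        mul_nonneg hm hσ2.le]
    · nlinarith [mul_nonneg (mul_nonneg (neg_nonneg.mpr hm.le) hσ.le) (sub_nonneg.mpr h2),
        mul_nonneg (mul_nonneg (mul_nonneg (neg_nonneg.mpr hm.le) hσ.le) hσ.le)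
          (sub_nonneg.mpr hδ1)]
  linarith

/-- On the small box `∏_i (u_{0,i}(x), u_{0,i}(x) + σ_i δ_x]` above the balanced point,
the exponent `Ψ` exceeds its value at the balanced point by at most a constant `K`. -/
theorem Psi_bounded_on_balanced_box (n : ℕ) (hn : 2 ≤ n) (μ σ : Fin n → ℝ)
    (hσ : ∀ i, 0 < σ i) :
    ∃ K > 0, ∃ x₀ : ℝ, ∀ x ≥ x₀, ∀ u : Fin n → ℝ,
      (∀ i, σ i * rbal n σ x < u i ∧
        u i ≤ σ i * rbal n σ x +
          σ i * (1 / (2 * n) * ((∏ k, σ k) / x) ^ (((n : ℝ) - 1) / n))) →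
      PsiExp μ σ u ≤ PsiExp μ σ (fun i => σ i * rbal n σ x) + K := by
  have hP : (0 : ℝ) < ∏ j, σ j := Finset.prod_pos fun i _ => hσ i
  have hnR : (2 : ℝ) ≤ (n : ℝ) := by exact_mod_cast hn
  have hn0 : (0 : ℝ) < n := by linarith
  refine ⟨∑ i, (2 + |μ i| / σ i), ?_, ∏ j, σ j, ?_⟩
  · refine Finset.sum_pos (fun i _ => by have := hσ i; positivity) ⟨⟨0, by omega⟩, mem_univ _⟩
  · intro x hx u hu
    have hx0 : (0 : ℝ) < x := lt_of_lt_of_le hP hx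
    set r := rbal n σ x with hrdef
    set δ := 1 / (2 * (n : ℝ)) * ((∏ k, σ k) / x) ^ (((n : ℝ) - 1) / n) with hδdef
    have hy0 : (0 : ℝ) < x / ∏ j, σ j := div_pos hx0 hP
    have hy1 : (1 : ℝ) ≤ x / ∏ j, σ j := (one_le_div hP).mpr hx
    have hr0 : 0 ≤ r := Real.rpow_nonneg hy0.le _
    have hz1 : ((∏ k, σ k) / x) ^ (((n : ℝ) - 1) / n) ≤ 1 :=
      Real.rpow_le_one (div_nonneg hP.le hx0.le)
        ((div_le_one hx0).mpr hx) (div_nonneg (by linarith) hn0.le)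
    have hδ0 : 0 ≤ δ := by
      have : (0:ℝ) ≤ ((∏ k, σ k) / x) ^ (((n : ℝ) - 1) / n) :=
        Real.rpow_nonneg (div_nonneg hP.le hx0.le) _
      rw [hδdef]; positivity
    have hδ1 : δ ≤ 1 := by
      rw [hδdef]
      have h2n : (1:ℝ) ≤ 2 * n := by linarith
      calc 1 / (2 * (n:ℝ)) * ((∏ k, σ k) / x) ^ (((n : ℝ) - 1) / n)
          ≤ 1 / (2 * (n:ℝ)) * 1 := by
            apply mul_le_mul_of_nonneg_left hz1 (by positivity)
        _ ≤ 1 := by rw [mul_one]; exact div_le_one_of_le₀ h2n (by positivity)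
    have hrδ : r * δ ≤ 1 := by
      have hzeq : ((∏ k, σ k) / x) ^ (((n : ℝ) - 1) / n)
          = (x / ∏ j, σ j) ^ (-(((n : ℝ) - 1) / n)) := by
        rw [Real.rpow_neg hy0.le, ← Real.inv_rpow hy0.le]
        congr 1
        field_simp
      have hre : r * ((∏ k, σ k) / x) ^ (((n : ℝ) - 1) / n)
          = (x / ∏ j, σ j) ^ ((1:ℝ)/n + -(((n : ℝ) - 1) / n)) := by
        rw [hrdef, rbal, hzeq, Real.rpow_add hy0]
      have hexp : (1:ℝ)/n + -(((n : ℝ) - 1) / n) ≤ 0 := by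
        have heq : (1:ℝ)/n + -(((n : ℝ) - 1) / n) = (2 - (n:ℝ)) / n := by
          field_simp; ring
        rw [heq]
        apply div_nonpos_of_nonpos_of_nonneg <;> linarith
      have : r * ((∏ k, σ k) / x) ^ (((n : ℝ) - 1) / n) ≤ 1 := by
        rw [hre]
        exact Real.rpow_le_one_of_one_le_of_nonpos hy1 hexp
      calc r * δ = 1 / (2 * (n:ℝ)) * (r * ((∏ k, σ k) / x) ^ (((n : ℝ) - 1) / n)) := by
            rw [hδdef]; ring
        _ ≤ 1 / (2 * (n:ℝ)) * 1 := mul_le_mul_of_nonneg_left this (by positivity)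
        _ ≤ 1 := by rw [mul_one]; apply div_le_one_of_le₀ (by linarith) (by positivity)
    rw [PsiExp, PsiExp, ← Finset.sum_add_distrib]
    refine Finset.sum_le_sum fun i _ => ?_
    exact per_term_bound (σ i) (μ i) r δ (u i) (hσ i) hr0 hδ0 hδ1 hrδ (hu i).1 (hu i).2
end

section
/- Let n ≥ 2, μ_1,…,μ_n ∈ ℝ, σ_1,…,σ_n > 0, and let X_1,…,X_n be independent random variables with X_i ~ N(μ_i, σ_i²). Set r(x) := (x/∏_{j=1}^n σ_j)^{1/n}. Then there exist c > 0 and x_0 such that for all x ≥ x_0, P( ∏_{i=1}^n X_i > x ) ≥ c · x^{−(n−1)} · exp( −(n/2) r(x)² + r(x) Σ_{i=1}^n μ_i/σ_i ). -/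
/-!
With `r = r(x)` the thresholds `t_i = σ_i r` satisfy `∏ t_i = x`, so the event `⋂ {X_i > t_i}`
lies in `{∏ X_i > x}` and, by independence, has probability `∏ P(X_i > σ_i r)`. Each of these
Gaussian tails is at least the mass of `(σ_i r, σ_i r + σ_i / r]`, on which the density is
decreasing, hence at least `σ_i / r` times the density at `σ_i (r + 1/r)`; this is a constant
times `r⁻¹ exp (-r² / 2 + r μ_i / σ_i)`. The product of the `n` factors `r⁻¹` is
`r^{-n} = (∏ σ_j) / x ≥ (∏ σ_j) x^{-(n-1)}`.
-/

open MeasureTheory ProbabilityTheory Finset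

open Real Filter Set
open scoped NNReal

namespace ProbabilityTheory

lemma gaussianPDFReal_antitoneOn (m : ℝ) (v : ℝ≥0) : AntitoneOn (gaussianPDFReal m v) (Ici m) := by
  intro x hx y hy hxy
  simp only [gaussianPDFReal]
  gcongr
  exact sub_nonneg.2 hx

lemma mul_gaussianPDFReal_le_gaussianReal_Ioi {m a δ : ℝ} (v : ℝ≥0) (hma : m ≤ a) (hδ : 0 ≤ δ) :
    δ * gaussianPDFReal m v (a + δ) ≤ (gaussianReal m v (Ioi a)).toReal := by
  rcases eq_or_ne v 0 with rfl | hv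
  · simp
  rw [gaussianReal_apply_eq_integral _ hv, ENNReal.toReal_ofReal
    (setIntegral_nonneg measurableSet_Ioi fun u _ ↦ gaussianPDFReal_nonneg _ _ _)]
  have hint := integrable_gaussianPDFReal m v
  calc δ * gaussianPDFReal m v (a + δ)
      = ∫ _ in Ioc a (a + δ), gaussianPDFReal m v (a + δ) := by
        rw [setIntegral_const, Real.volume_real_Ioc_of_le (by linarith), smul_eq_mul,
          add_sub_cancel_left]
    _ ≤ ∫ u in Ioc a (a + δ), gaussianPDFReal m v u :=
        setIntegral_mono_on (integrableOn_const measure_Ioc_lt_top.ne) hint.integrableOn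
          measurableSet_Ioc fun u hu ↦ gaussianPDFReal_antitoneOn m v
            (hma.trans hu.1.le) (by simp only [Set.mem_Ici]; linarith [hu.1]) hu.2
    _ ≤ ∫ u in Ioi a, gaussianPDFReal m v u :=
        setIntegral_mono_set hint.integrableOn (ae_of_all _ fun u ↦ gaussianPDFReal_nonneg _ _ _)
          Ioc_subset_Ioi_self.eventuallyLE

lemma eventually_const_mul_le_gaussianReal_Ioi (m : ℝ) {s : ℝ} (hs : 0 < s) :
    ∃ c > 0, ∀ᶠ r in atTop,
      c * r⁻¹ * exp (-(r ^ 2 / 2) + r * (m / s)) ≤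
        (gaussianReal m (s ^ 2).toNNReal (Ioi (s * r))).toReal := by
  set t := m / s with ht
  refine ⟨(√(2 * π))⁻¹ * exp (-((2 + (1 + |t|) ^ 2) / 2)), by positivity, ?_⟩
  filter_upwards [eventually_ge_atTop (max 1 t)] with r hr
  have hr1 : 1 ≤ r := le_of_max_le_left hr
  have hr0 : 0 < r := one_pos.trans_le hr1
  have hmr : m ≤ s * r := by
    rw [mul_comm, ← div_le_iff₀ hs]; exact le_of_max_le_right hr
  -- `(r + r⁻¹ - t)² = r² - 2 r t + 2 + (r⁻¹ - t)²` and `|r⁻¹ - t| ≤ 1 + |t|`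
  have hsq : (r + r⁻¹ - t) ^ 2 ≤ r ^ 2 - 2 * r * t + (2 + (1 + |t|) ^ 2) := by
    have h1 : |r⁻¹ - t| ≤ 1 + |t| :=
      (abs_sub _ _).trans <| by
        rw [abs_of_pos (inv_pos.2 hr0)]; gcongr; exact inv_le_one_of_one_le₀ hr1
    have h2 := sq_le_sq' (neg_le_of_abs_le h1) (le_of_abs_le h1)
    have h3 : r * r⁻¹ = 1 := mul_inv_cancel₀ hr0.ne'
    nlinarith
  have hpdf : gaussianPDFReal m (s ^ 2).toNNReal (s * r + s / r) =
      (s * √(2 * π))⁻¹ * exp (-((r + r⁻¹ - t) ^ 2 / 2)) := by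
    rw [gaussianPDFReal, Real.coe_toNNReal _ (sq_nonneg s), mul_comm (2 * π),
      Real.sqrt_mul (sq_nonneg s), Real.sqrt_sq hs.le]
    congr 2
    rw [ht]
    field_simp
  calc (√(2 * π))⁻¹ * exp (-((2 + (1 + |t|) ^ 2) / 2)) * r⁻¹ * exp (-(r ^ 2 / 2) + r * t)
      = s / r * ((s * √(2 * π))⁻¹ *
          exp (-((r ^ 2 - 2 * r * t + (2 + (1 + |t|) ^ 2)) / 2))) := by
        rw [← mul_assoc, show s / r * (s * √(2 * π))⁻¹ = (√(2 * π))⁻¹ * r⁻¹ by field_simp,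
          show -((r ^ 2 - 2 * r * t + (2 + (1 + |t|) ^ 2)) / 2) =
            -((2 + (1 + |t|) ^ 2) / 2) + (-(r ^ 2 / 2) + r * t) by ring,
          exp_add (-((2 + (1 + |t|) ^ 2) / 2))]
        ring
    _ ≤ s / r * gaussianPDFReal m (s ^ 2).toNNReal (s * r + s / r) := by
        rw [hpdf]; gcongr
    _ ≤ _ := mul_gaussianPDFReal_le_gaussianReal_Ioi _ hmr (by positivity)

lemma iIndepFun.prod_map_Ioi_le_measure_lt_prod {Ω ι : Type*} [MeasurableSpace Ω] [Fintype ι]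
    [Nonempty ι] {P : Measure Ω} {X : ι → Ω → ℝ} (hX : iIndepFun X P)
    (hXm : ∀ i, AEMeasurable (X i) P) {t : ι → ℝ} (ht : ∀ i, 0 < t i) :
    ∏ i, P.map (X i) (Ioi (t i)) ≤ P {ω | ∏ i, t i < ∏ i, X i ω} := by
  simp_rw [Measure.map_apply_of_aemeasurable (hXm _) measurableSet_Ioi]
  rw [← hX.meas_iInter fun i ↦ ⟨Ioi (t i), measurableSet_Ioi, rfl⟩]
  refine measure_mono fun ω hω ↦ ?_
  simp only [Set.mem_iInter, Set.mem_preimage, Set.mem_Ioi] at hω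
  exact prod_lt_prod_of_nonempty (fun i _ ↦ ht i) (fun i _ ↦ hω i) univ_nonempty

end ProbabilityTheory

section rbal

variable {n : ℕ} {σ : Fin n → ℝ}

lemma rbal_pow (hn : n ≠ 0) {x : ℝ} (hx : 0 ≤ x / ∏ j, σ j) : rbal n σ x ^ n = x / ∏ j, σ j := by
  rw [rbal, one_div, rpow_inv_natCast_pow hx hn]

lemma prod_mul_rbal (hn : n ≠ 0) (hσ : 0 < ∏ j, σ j) {x : ℝ} (hx : 0 ≤ x) :
    ∏ i, σ i * rbal n σ x = x := by
  rw [prod_mul_distrib, prod_const, card_univ, Fintype.card_fin, rbal_pow hn (by positivity),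
    mul_div_cancel₀ _ hσ.ne']

lemma tendsto_rbal_atTop (hn : n ≠ 0) (hσ : 0 < ∏ j, σ j) : Tendsto (rbal n σ) atTop atTop :=
  (tendsto_rpow_atTop (by positivity)).comp (tendsto_id.atTop_div_const hσ)

lemma prod_mul_rpow_le_inv_rbal_pow (hn : 2 ≤ n) (hσ : 0 < ∏ j, σ j) {x : ℝ} (hx : 1 ≤ x) :
    (∏ j, σ j) * x ^ (-((n : ℝ) - 1)) ≤ (rbal n σ x)⁻¹ ^ n := by
  have hx0 : 0 < x := one_pos.trans_le hx
  rw [inv_pow, rbal_pow (by omega) (by positivity), inv_div, div_eq_mul_inv, ← rpow_neg_one x]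
  gcongr
  have : (2 : ℝ) ≤ n := by exact_mod_cast hn
  linarith

end rbal

/-- Lower bound for the right tail of a product of independent Gaussians:
`P(∏ X_i > x) ≥ c x^{-(n-1)} exp(-(n/2) r(x)² + r(x) Σ μ_i/σ_i)` for large `x`. -/
theorem product_gaussian_tail_lower_bound
    {Ω : Type*} [MeasureSpace Ω] [IsProbabilityMeasure (ℙ : Measure Ω)]
    (n : ℕ) (hn : 2 ≤ n) (μ σ : Fin n → ℝ) (hσ : ∀ i, 0 < σ i)
    (X : Fin n → Ω → ℝ)
    (hindep : iIndepFun X ℙ)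
    (hlaw : ∀ i, Measure.map (X i) ℙ = gaussianReal (μ i) (Real.toNNReal (σ i ^ 2))) :
    ∃ c > 0, ∃ x₀ : ℝ, ∀ x ≥ x₀,
      c * x ^ (-((n : ℝ) - 1)) *
          Real.exp (-((n : ℝ) / 2) * rbal n σ x ^ 2 + rbal n σ x * ∑ i, μ i / σ i) ≤
        (ℙ {ω | x < ∏ i, X i ω}).toReal := by
  have : Nonempty (Fin n) := ⟨⟨0, by omega⟩⟩
  have hσprod : 0 < ∏ i, σ i := prod_pos fun i _ ↦ hσ i
  choose c hc htail using fun i ↦ eventually_const_mul_le_gaussianReal_Ioi (μ i) (hσ i)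
  obtain ⟨x₀, hx₀⟩ := eventually_atTop.1 <| ((tendsto_rbal_atTop (by omega) hσprod).eventually
    (eventually_all.2 htail)).and (eventually_ge_atTop 1)
  have hcprod : 0 < ∏ i, c i := prod_pos fun i _ ↦ hc i
  refine ⟨(∏ i, c i) * ∏ i, σ i, by positivity, x₀, fun x hx ↦ ?_⟩
  obtain ⟨hr, hx1⟩ := hx₀ x hx
  set r := rbal n σ x
  have hr0 : 0 < r := rpow_pos_of_pos (div_pos (one_pos.trans_le hx1) hσprod) _
  have hXm : ∀ i, AEMeasurable (X i) ℙ := fun i ↦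
    .of_map_ne_zero (by rw [hlaw i]; exact IsProbabilityMeasure.ne_zero _)
  calc (∏ i, c i) * (∏ i, σ i) * x ^ (-((n : ℝ) - 1)) *
        exp (-((n : ℝ) / 2) * r ^ 2 + r * ∑ i, μ i / σ i)
      ≤ (∏ i, c i) * r⁻¹ ^ n * exp (∑ i, (-(r ^ 2 / 2) + r * (μ i / σ i))) := by
        rw [mul_assoc (∏ i, c i), sum_add_distrib, sum_const, card_univ, Fintype.card_fin,
          ← mul_sum, nsmul_eq_mul, show -((n : ℝ) / 2) * r ^ 2 = n * -(r ^ 2 / 2) by ring]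
        gcongr
        exact prod_mul_rpow_le_inv_rbal_pow hn hσprod hx1
    _ = ∏ i, c i * r⁻¹ * exp (-(r ^ 2 / 2) + r * (μ i / σ i)) := by
        rw [prod_mul_distrib, prod_mul_distrib, prod_const, card_univ, Fintype.card_fin, exp_sum]
    _ ≤ ∏ i, (Measure.map (X i) ℙ (Ioi (σ i * r))).toReal :=
        prod_le_prod (fun i _ ↦ by have := hc i; positivity) fun i _ ↦ hlaw i ▸ hr i
    _ ≤ (ℙ {ω | x < ∏ i, X i ω}).toReal := by
        have hthreshold : ∏ i, σ i * r = x := prod_mul_rbal (by omega) hσprod (by linarith)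
        rw [← ENNReal.toReal_prod]
        conv_rhs => rw [← hthreshold]
        exact ENNReal.toReal_mono (measure_ne_top _ _) <|
          hindep.prod_map_Ioi_le_measure_lt_prod hXm fun i ↦ mul_pos (hσ i) hr0
end

section
/- Let n ≥ 1, μ_1,…,μ_n ∈ ℝ, σ_1,…,σ_n > 0, and let s ∈ {−1,+1}^n satisfy ∏_{i=1}^n s_i = +1. For β > 0 define u_i(β) := (μ_i + s_i √(μ_i² + 4σ_i² β))/2. Then for every β > 0 and every i, s_i u_i(β) > 0 and u_i(β)² − μ_i u_i(β) − σ_i² β = 0; moreover the function g_s(β) := ∏_{i=1}^n u_i(β) is positive and strictly increasing on (0, ∞), so that for each x > 0 the equation g_s(β) = x has at most one solution β ∈ (0, ∞). -/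
open Finset

/-- Uniqueness of the boundary saddle at a fixed admissible sign pattern: the per-coordinate
roots `u_i(β)` have the prescribed signs, solve the quadratics `u² - μ_i u - σ_i² β = 0`,
and their product `g_s(β)` is positive and strictly increasing on `(0, ∞)`, so that
`g_s(β) = x` has at most one positive solution. -/
theorem saddle_system_unique_solution (n : ℕ) (hn : 1 ≤ n) (μ σ : Fin n → ℝ)
    (hσ : ∀ i, 0 < σ i) (s : Fin n → ℝ) (hs : ∀ i, s i = 1 ∨ s i = -1)
    (hprod : ∏ i, s i = 1)
    (u : Fin n → ℝ → ℝ)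
    (hu : ∀ i β, u i β = (μ i + s i * Real.sqrt (μ i ^ 2 + 4 * σ i ^ 2 * β)) / 2) :
    (∀ β > (0 : ℝ), ∀ i, 0 < s i * u i β ∧
        u i β ^ 2 - μ i * u i β - σ i ^ 2 * β = 0)
    ∧ (∀ β > (0 : ℝ), 0 < ∏ i, u i β)
    ∧ StrictMonoOn (fun β => ∏ i, u i β) (Set.Ioi 0)
    ∧ (∀ x > (0 : ℝ), ∀ β₁ ∈ Set.Ioi (0 : ℝ), ∀ β₂ ∈ Set.Ioi (0 : ℝ),
        (∏ i, u i β₁) = x → (∏ i, u i β₂) = x → β₁ = β₂) := by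
  have hs2 : ∀ i, s i * s i = 1 := fun i => by rcases hs i with h | h <;> rw [h] <;> norm_num
  -- s i * u i β has a simple form
  have key : ∀ (i : Fin n) (β : ℝ),
      s i * u i β = (s i * μ i + Real.sqrt (μ i ^ 2 + 4 * σ i ^ 2 * β)) / 2 := by
    intro i β
    rcases hs i with h | h <;> rw [hu, h] <;> ring
  -- |μ i| < sqrt D for β > 0
  have habs : ∀ (i : Fin n) (β : ℝ), 0 < β →
      |μ i| < Real.sqrt (μ i ^ 2 + 4 * σ i ^ 2 * β) := by
    intro i β hβ
    have h1 : μ i ^ 2 < μ i ^ 2 + 4 * σ i ^ 2 * β := by nlinarith [mul_pos (pow_pos (hσ i) 2) hβ]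
    have := Real.sqrt_lt_sqrt (sq_nonneg (μ i)) h1
    rwa [Real.sqrt_sq_eq_abs] at this
  -- positivity of s i * u i β
  have hpos : ∀ (β : ℝ), 0 < β → ∀ i, 0 < s i * u i β := by
    intro β hβ i
    rw [key]
    have := habs i β hβ
    have h2 : |s i * μ i| = |μ i| := by
      rcases hs i with h | h <;> rw [h] <;> simp
    have := neg_abs_le (s i * μ i)
    rw [h2] at this
    linarith
  -- quadratic equation
  have hquad : ∀ (β : ℝ), 0 < β → ∀ i,
      u i β ^ 2 - μ i * u i β - σ i ^ 2 * β = 0 := by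
    intro β hβ i
    have hD : (0:ℝ) ≤ μ i ^ 2 + 4 * σ i ^ 2 * β := by nlinarith [hσ i]
    have hr2 : Real.sqrt (μ i ^ 2 + 4 * σ i ^ 2 * β) ^ 2 = μ i ^ 2 + 4 * σ i ^ 2 * β :=
      Real.sq_sqrt hD
    rw [hu]
    nlinarith [hs2 i, hr2]
  -- product over s is 1, so ∏ u = ∏ (s*u)
  have hprodeq : ∀ (β : ℝ), (∏ i, u i β) = ∏ i, (s i * u i β) := by
    intro β
    rw [Finset.prod_mul_distrib, hprod, one_mul]
  have hppos : ∀ β > (0:ℝ), 0 < ∏ i, u i β := by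
    intro β hβ
    rw [hprodeq]
    exact Finset.prod_pos fun i _ => hpos β hβ i
  have hne : (Finset.univ : Finset (Fin n)).Nonempty := by
    have : Nonempty (Fin n) := ⟨⟨0, hn⟩⟩
    exact Finset.univ_nonempty
  have hmono : StrictMonoOn (fun β => ∏ i, u i β) (Set.Ioi 0) := by
    intro β₁ h1 β₂ h2 hlt
    simp only [Set.mem_Ioi] at h1 h2
    simp only
    rw [hprodeq, hprodeq]
    apply Finset.prod_lt_prod_of_nonempty (fun i _ => hpos β₁ h1 i) _ hne
    intro i _
    rw [key, key]
    have : Real.sqrt (μ i ^ 2 + 4 * σ i ^ 2 * β₁) < Real.sqrt (μ i ^ 2 + 4 * σ i ^ 2 * β₂) := by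
      apply Real.sqrt_lt_sqrt (by nlinarith [mul_pos (pow_pos (hσ i) 2) h1])
      nlinarith [pow_pos (hσ i) 2]
    linarith
  refine ⟨fun β hβ i => ⟨hpos β hβ i, hquad β hβ i⟩, hppos, hmono, ?_⟩
  intro x hx β₁ h1 β₂ h2 e1 e2
  exact hmono.injOn h1 h2 (by rw [e1, e2])
end

section
/- Let n ≥ 1, μ_1,…,μ_n ∈ ℝ, σ_1,…,σ_n > 0, and let s, s' ∈ {−1,+1}^n both satisfy ∏_i s_i = +1 and ∏_i s'_i = +1. Define Ψ(u) := Σ_{i=1}^n ( u_i²/(2σ_i²) − μ_i u_i/σ_i² ), L_s := Σ_{i=1}^n s_i μ_i/σ_i, and m_s(x) := inf{ Ψ(u) : ∏_{i=1}^n u_i = x, s_i u_i > 0 for all i }. If L_s < L_{s'}, then m_s(x) − m_{s'}(x) → +∞ as x → ∞; equivalently, exp(−m_s(x))/exp(−m_{s'}(x)) → 0. -/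
open Finset Filter
open scoped Topology

/-- The constrained minimum of `Ψ` over the orthant piece of `{∏ u_i = x}` with sign
pattern `s`. -/
noncomputable def saddleMin {n : ℕ} (μ σ : Fin n → ℝ) (s : Fin n → ℝ) (x : ℝ) : ℝ :=
  sInf {v : ℝ | ∃ u : Fin n → ℝ,
    (∏ i, u i) = x ∧ (∀ i, 0 < s i * u i) ∧ v = PsiExp μ σ u}

/-!
In the coordinates `t i = s i * u i / σ i` the orthant with sign pattern `s` becomes the
positive orthant, the constraint `∏ u i = x` becomes `∏ t i = r ^ n` with
`r = (x / ∏ σ i) ^ (1 / n)`, and `Ψ u = ∑ (t i ^ 2 / 2 - b i * t i)` with `b i = s i * μ i / σ i`.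
Completing the square around `t i = r` and AM-GM (`∑ t i ≥ n r`) give
`n r² / 2 - r L_s - ∑ b i ^ 2 / 2 ≤ m_s(x) ≤ n r² / 2 - r L_s`, the upper bound being attained
at `t ≡ r`. Since `∑ b i ^ 2` does not depend on `s`, `m_s(x) - m_{s'}(x)` is at least
`(L_{s'} - L_s) r` minus a constant, and `r → ∞` with `x`.
-/

section AMGM

variable {ι : Type*} [Fintype ι]

theorem card_le_sum_of_prod_eq_one {q : ι → ℝ} (hq : ∀ i, 0 < q i) (hprod : ∏ i, q i = 1) :
    (Fintype.card ι : ℝ) ≤ ∑ i, q i := by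
  have hlog : ∑ i, Real.log (q i) = 0 := by
    rw [← Real.log_prod fun i _ => (hq i).ne', hprod, Real.log_one]
  have h := sum_le_sum fun i (_ : i ∈ univ) => Real.log_le_sub_one_of_pos (hq i)
  rw [hlog, sum_sub_distrib, sum_const, card_univ, nsmul_one] at h
  linarith

theorem card_mul_le_sum_of_prod_eq_pow {t : ι → ℝ} {r : ℝ} (hr : 0 < r) (ht : ∀ i, 0 < t i)
    (hprod : ∏ i, t i = r ^ Fintype.card ι) : Fintype.card ι * r ≤ ∑ i, t i := by
  have h := card_le_sum_of_prod_eq_one (q := fun i => t i / r) (fun i => div_pos (ht i) hr)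
    (by rw [prod_div_distrib, hprod, prod_const, card_univ, div_self (pow_pos hr _).ne'])
  rwa [← sum_div, le_div_iff₀ hr] at h

theorem card_mul_sq_half_sub_le_sum {t : ι → ℝ} {r : ℝ} (b : ι → ℝ) (hr : 0 < r)
    (ht : ∀ i, 0 < t i) (hprod : ∏ i, t i = r ^ Fintype.card ι) :
    Fintype.card ι * r ^ 2 / 2 - r * ∑ i, b i - (∑ i, b i ^ 2) / 2
      ≤ ∑ i, (t i ^ 2 / 2 - b i * t i) := by
  have hsum := card_mul_le_sum_of_prod_eq_pow hr ht hprod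
  calc Fintype.card ι * r ^ 2 / 2 - r * ∑ i, b i - (∑ i, b i ^ 2) / 2
      ≤ r * ∑ i, t i - Fintype.card ι * r ^ 2 / 2 - r * ∑ i, b i - (∑ i, b i ^ 2) / 2 := by
        nlinarith
    _ = ∑ i, (r * t i - r ^ 2 / 2 - r * b i - b i ^ 2 / 2) := by
        simp only [sum_sub_distrib, mul_sum, sum_const, card_univ, nsmul_eq_mul, sum_div]
        ring
    _ ≤ ∑ i, (t i ^ 2 / 2 - b i * t i) :=
        sum_le_sum fun i _ => by nlinarith [sq_nonneg (t i - r - b i)]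

end AMGM

section SignPattern

variable {n : ℕ} {μ σ s : Fin n → ℝ}

theorem psiExp_eq_sum_normalized (hs : ∀ i, s i ^ 2 = 1)
    (u : Fin n → ℝ) :
    PsiExp μ σ u
      = ∑ i, ((s i * u i / σ i) ^ 2 / 2 - s i * (μ i / σ i) * (s i * u i / σ i)) := by
  refine sum_congr rfl fun i _ => ?_
  linear_combination (μ i * u i / σ i ^ 2 - u i ^ 2 / (2 * σ i ^ 2)) * hs i

theorem psiExp_signed_scaled (hσ : ∀ i, σ i ≠ 0) (hs : ∀ i, s i ^ 2 = 1) (r : ℝ) :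
    PsiExp μ σ (fun i => s i * σ i * r) = n * r ^ 2 / 2 - r * ∑ i, s i * (μ i / σ i) := by
  have hnormalized : ∀ i, s i * (s i * σ i * r) / σ i = r := fun i => by
    rw [← mul_assoc, ← mul_assoc, ← sq, hs i, one_mul, mul_div_right_comm, div_self (hσ i),
      one_mul]
  simp only [psiExp_eq_sum_normalized hs, hnormalized, sum_sub_distrib, sum_const, card_univ,
    Fintype.card_fin, nsmul_eq_mul, ← sum_mul]
  ring

theorem le_psiExp_of_prod_eq (hσ : ∀ i, 0 < σ i) (hs : ∀ i, s i ^ 2 = 1)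
    (hprod : ∏ i, s i = 1) {r : ℝ} (hr : 0 < r) {u : Fin n → ℝ}
    (hu : ∏ i, u i = r ^ n * ∏ i, σ i) (hpos : ∀ i, 0 < s i * u i) :
    n * r ^ 2 / 2 - r * ∑ i, s i * (μ i / σ i) - (∑ i, (μ i / σ i) ^ 2) / 2
      ≤ PsiExp μ σ u := by
  have htprod : ∏ i, s i * u i / σ i = r ^ Fintype.card (Fin n) := by
    rw [prod_div_distrib, prod_mul_distrib, hprod, one_mul, hu, Fintype.card_fin,
      mul_div_cancel_right₀ _ (prod_pos fun i _ => hσ i).ne']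
  have hbsq : ∑ i, (s i * (μ i / σ i)) ^ 2 = ∑ i, (μ i / σ i) ^ 2 :=
    sum_congr rfl fun i _ => by rw [mul_pow, hs i, one_mul]
  have h := card_mul_sq_half_sub_le_sum (fun i => s i * (μ i / σ i)) hr
    (fun i => div_pos (hpos i) (hσ i)) htprod
  rw [Fintype.card_fin, hbsq] at h
  rwa [psiExp_eq_sum_normalized hs]

theorem saddleMin_bounds (hσ : ∀ i, 0 < σ i) (hs : ∀ i, s i ^ 2 = 1) (hprod : ∏ i, s i = 1)
    {r : ℝ} (hr : 0 < r) :
    n * r ^ 2 / 2 - r * ∑ i, s i * (μ i / σ i) - (∑ i, (μ i / σ i) ^ 2) / 2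
        ≤ saddleMin μ σ s (r ^ n * ∏ i, σ i)
      ∧ saddleMin μ σ s (r ^ n * ∏ i, σ i) ≤ n * r ^ 2 / 2 - r * ∑ i, s i * (μ i / σ i) := by
  have hcandidate : n * r ^ 2 / 2 - r * ∑ i, s i * (μ i / σ i) ∈ {v : ℝ | ∃ u : Fin n → ℝ,
      (∏ i, u i) = r ^ n * ∏ i, σ i ∧ (∀ i, 0 < s i * u i) ∧ v = PsiExp μ σ u} := by
    refine ⟨fun i => s i * σ i * r, ?_, fun i => ?_,
      (psiExp_signed_scaled (fun i => (hσ i).ne') hs r).symm⟩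
    · rw [prod_mul_distrib, prod_mul_distrib, hprod, one_mul, prod_const, card_univ,
        Fintype.card_fin, mul_comm]
    · rw [← mul_assoc, ← mul_assoc, ← sq, hs i, one_mul]
      exact mul_pos (hσ i) hr
  have hlower : ∀ v ∈ {v : ℝ | ∃ u : Fin n → ℝ,
      (∏ i, u i) = r ^ n * ∏ i, σ i ∧ (∀ i, 0 < s i * u i) ∧ v = PsiExp μ σ u},
      n * r ^ 2 / 2 - r * ∑ i, s i * (μ i / σ i) - (∑ i, (μ i / σ i) ^ 2) / 2 ≤ v := by
    rintro v ⟨u, hu, hpos, rfl⟩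
    exact le_psiExp_of_prod_eq hσ hs hprod hr hu hpos
  exact ⟨le_csInf ⟨_, hcandidate⟩ hlower, csInf_le ⟨_, hlower⟩ hcandidate⟩

end SignPattern

/-- Sign patterns with strictly smaller `L_s` are exponentially negligible:
if `L_s < L_{s'}` then `m_s(x) - m_{s'}(x) → ∞`, equivalently
`exp(-m_s(x))/exp(-m_{s'}(x)) → 0`. -/
theorem nonmaximal_sign_pattern_negligible (n : ℕ) (hn : 1 ≤ n) (μ σ : Fin n → ℝ)
    (hσ : ∀ i, 0 < σ i)
    (s s' : Fin n → ℝ) (hs : ∀ i, s i = 1 ∨ s i = -1) (hs' : ∀ i, s' i = 1 ∨ s' i = -1)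
    (hprod : ∏ i, s i = 1) (hprod' : ∏ i, s' i = 1)
    (hL : ∑ i, s i * (μ i / σ i) < ∑ i, s' i * (μ i / σ i)) :
    Tendsto (fun x => saddleMin μ σ s x - saddleMin μ σ s' x) atTop atTop
    ∧ Tendsto (fun x => Real.exp (-saddleMin μ σ s x) / Real.exp (-saddleMin μ σ s' x))
        atTop (𝓝 0) := by
  have hσprod : 0 < ∏ i, σ i := prod_pos fun i _ => hσ i
  set r : ℝ → ℝ := fun x => (x / ∏ i, σ i) ^ (n : ℝ)⁻¹
  have hr : Tendsto r atTop atTop :=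
    (tendsto_rpow_atTop (by positivity)).comp (tendsto_id.atTop_div_const hσprod)
  have hgap : ∀ᶠ x in atTop,
      (∑ i, s' i * (μ i / σ i) - ∑ i, s i * (μ i / σ i)) * r x - (∑ i, (μ i / σ i) ^ 2) / 2
        ≤ saddleMin μ σ s x - saddleMin μ σ s' x := by
    filter_upwards [eventually_gt_atTop 0] with x hx
    have hrx : 0 < r x := Real.rpow_pos_of_pos (div_pos hx hσprod) _
    have hscale : r x ^ n * ∏ i, σ i = x := by
      rw [Real.rpow_inv_natCast_pow (div_pos hx hσprod).le (by omega),
        div_mul_cancel₀ _ hσprod.ne']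
    have hlower := (saddleMin_bounds (μ := μ) hσ (fun i => sq_eq_one_iff.2 (hs i)) hprod hrx).1
    have hupper := (saddleMin_bounds (μ := μ) hσ (fun i => sq_eq_one_iff.2 (hs' i)) hprod' hrx).2
    rw [hscale] at hlower hupper
    linarith
  have hdiff := tendsto_atTop_mono' atTop hgap
    (tendsto_atTop_add_const_right _ _ (hr.const_mul_atTop (sub_pos.2 hL)))
  refine ⟨hdiff, ?_⟩
  refine (Real.tendsto_exp_atBot.comp (tendsto_neg_atTop_atBot.comp hdiff)).congr fun x => ?_
  simp only [Function.comp_apply, ← Real.exp_sub, neg_sub, sub_neg_eq_add, neg_add_eq_sub]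
end

section
/- Let n ≥ 2, μ_1,…,μ_n ∈ ℝ, σ_1,…,σ_n > 0, and w > 0. Then the function (u_1,…,u_{n−1}) ↦ (1/|u_1 ⋯ u_{n−1}|) · exp( − Σ_{k=1}^{n−1} ( u_k²/(2σ_k²) − μ_k u_k/σ_k² ) − ( v²/(2σ_n²) − μ_n v/σ_n² ) ), where v := w/(u_1 ⋯ u_{n−1}), is Lebesgue-integrable over the set { (u_1,…,u_{n−1}) ∈ ℝ^{n−1} : u_1 ⋯ u_{n−1} ≠ 0 }. -/
open MeasureTheory Finset

lemma quad_bound (s a x : ℝ) (hs : 0 < s) :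
    x + a * x / s - x ^ 2 / (2 * s) ≤ (1 + a / s) ^ 2 * s / 2 := by
  have hdiff : (1 + a / s) ^ 2 * s / 2 - (x + a * x / s - x ^ 2 / (2 * s))
      = (s + a - x) ^ 2 / (2 * s) := by
    field_simp
    ring
  nlinarith [div_nonneg (sq_nonneg (s + a - x)) (by linarith : (0:ℝ) ≤ 2 * s)]

/-- One-dimensional Gaussian-type integrability with a linear term. -/
lemma one_dim_integrable (b c : ℝ) (hb : 0 < b) :
    Integrable (fun x : ℝ => Real.exp (-(x ^ 2 / (2 * b ^ 2) - c * x / b ^ 2))) := by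
  have hb2 : (0:ℝ) < 1 / (4 * b ^ 2) := by positivity
  have hint : Integrable (fun x : ℝ =>
      Real.exp (c ^ 2 / b ^ 2) * Real.exp (-(1 / (4 * b ^ 2)) * x ^ 2)) :=
    (integrable_exp_neg_mul_sq hb2).const_mul _
  refine hint.mono' (Continuous.aestronglyMeasurable (by fun_prop))
    (Filter.Eventually.of_forall fun x => ?_)
  rw [Real.norm_eq_abs, abs_of_pos (Real.exp_pos _), ← Real.exp_add]
  apply Real.exp_le_exp.2
  have hb4 : (0:ℝ) < b ^ 2 := by positivity
  have key : -(x ^ 2 / (2 * b ^ 2) - c * x / b ^ 2) = (-(x ^ 2) / 2 + c * x) / b ^ 2 := by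
    ring
  have key2 : c ^ 2 / b ^ 2 + -(1 / (4 * b ^ 2)) * x ^ 2 = (c ^ 2 + -(x ^ 2) / 4) / b ^ 2 := by
    ring
  rw [key, key2, div_eq_mul_inv, div_eq_mul_inv (c ^ 2 + -(x ^ 2) / 4)]
  apply mul_le_mul_of_nonneg_right (by nlinarith [sq_nonneg (x / 2 - c)]) (by positivity)

/-- The problematic factor is uniformly bounded. -/
lemma bound_factor (σn μn w t : ℝ) (hσ : 0 < σn) (hw : 0 < w) (ht : t ≠ 0) :
    (1 / |t|) * Real.exp (-((w / t) ^ 2 / (2 * σn ^ 2) - μn * (w / t) / σn ^ 2)) ≤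
      (1 / w) * Real.exp ((1 + |μn| / σn ^ 2) ^ 2 * σn ^ 2 / 2) := by
  set v : ℝ := w / t with hv
  have hvne : v ≠ 0 := div_ne_zero hw.ne' ht
  have htabs : |t| = w / |v| := by
    rw [hv, abs_div, abs_of_pos hw]
    field_simp
  have hvpos : 0 < |v| := abs_pos.2 hvne
  have h1 : 1 / |t| = |v| / w := by rw [htabs]; field_simp
  rw [h1, div_mul_eq_mul_div, div_le_iff₀ hw, mul_comm (1 / w) _, mul_assoc]
  rw [div_mul_cancel₀ _ hw.ne', mul_one]
  calc |v| * Real.exp (-(v ^ 2 / (2 * σn ^ 2) - μn * v / σn ^ 2))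
      ≤ Real.exp |v| * Real.exp (-(v ^ 2 / (2 * σn ^ 2) - μn * v / σn ^ 2)) := by
        apply mul_le_mul_of_nonneg_right _ (Real.exp_pos _).le
        linarith [Real.add_one_le_exp |v|, abs_nonneg v]
    _ = Real.exp (|v| + -(v ^ 2 / (2 * σn ^ 2) - μn * v / σn ^ 2)) := (Real.exp_add _ _).symm
    _ ≤ Real.exp ((1 + |μn| / σn ^ 2) ^ 2 * σn ^ 2 / 2) := by
        apply Real.exp_le_exp.2
        have hs : (0:ℝ) < σn ^ 2 := by positivity
        have hμv : μn * v ≤ |μn| * |v| := by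
          calc μn * v ≤ |μn * v| := le_abs_self _
            _ = |μn| * |v| := abs_mul _ _
        have key : |v| + |μn| * |v| / σn ^ 2 - v ^ 2 / (2 * σn ^ 2)
            ≤ (1 + |μn| / σn ^ 2) ^ 2 * σn ^ 2 / 2 := by
          have hv2 : v ^ 2 = |v| ^ 2 := (sq_abs v).symm
          rw [hv2]
          exact quad_bound (σn ^ 2) |μn| |v| hs
        have : μn * v / σn ^ 2 ≤ |μn| * |v| / σn ^ 2 := by
          rw [div_eq_mul_inv, div_eq_mul_inv]
          exact mul_le_mul_of_nonneg_right hμv (by positivity)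
        linarith

/-- Integrability of the inner integrand after the change of variables
`u_n = w/(u_1 ⋯ u_{n-1})` at fixed product value `w > 0`: the function
`(1/|u_1⋯u_{n-1}|) exp(-Φ_w(u))` is Lebesgue-integrable over `{u : ∏ u_k ≠ 0}`. -/
theorem inner_integrand_integrable (n : ℕ) (hn : 2 ≤ n) (μ σ : Fin n → ℝ)
    (hσ : ∀ i, 0 < σ i) (w : ℝ) (hw : 0 < w) :
    IntegrableOn
      (fun u : Fin (n - 1) → ℝ =>
        (1 / |∏ k, u k|) *
          Real.exp (-(∑ k : Fin (n - 1),
              (u k ^ 2 / (2 * σ (Fin.castLE (Nat.sub_le n 1) k) ^ 2) -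
                μ (Fin.castLE (Nat.sub_le n 1) k) * u k /
                  σ (Fin.castLE (Nat.sub_le n 1) k) ^ 2))
            - ((w / ∏ k, u k) ^ 2 / (2 * σ ⟨n - 1, by omega⟩ ^ 2) -
                μ ⟨n - 1, by omega⟩ * (w / ∏ k, u k) / σ ⟨n - 1, by omega⟩ ^ 2)))
      {u : Fin (n - 1) → ℝ | (∏ k, u k) ≠ 0} volume := by
  set σn : ℝ := σ ⟨n - 1, by omega⟩ with hσn
  set μn : ℝ := μ ⟨n - 1, by omega⟩ with hμn
  set μ' : Fin (n - 1) → ℝ := fun k => μ (Fin.castLE (Nat.sub_le n 1) k) with hμ'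
  set σ' : Fin (n - 1) → ℝ := fun k => σ (Fin.castLE (Nat.sub_le n 1) k) with hσ'
  set C : ℝ := (1 / w) * Real.exp ((1 + |μn| / σn ^ 2) ^ 2 * σn ^ 2 / 2) with hC
  -- dominating function
  have hgint : Integrable (fun u : Fin (n - 1) → ℝ =>
      C * ∏ k, Real.exp (-(u k ^ 2 / (2 * σ' k ^ 2) - μ' k * u k / σ' k ^ 2))) := by
    exact (Integrable.fintype_prod
      (fun k => one_dim_integrable (σ' k) (μ' k) (hσ _))).const_mul C
  have hsmeas : MeasurableSet {u : Fin (n - 1) → ℝ | (∏ k, u k) ≠ 0} := by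
    have : Measurable fun u : Fin (n - 1) → ℝ => ∏ k, u k := by fun_prop
    exact (this (measurableSet_singleton 0)).compl
  refine (hgint.integrableOn).mono' ?_ ?_
  · apply AEStronglyMeasurable.restrict
    apply Measurable.aestronglyMeasurable
    fun_prop
  · rw [ae_restrict_iff' hsmeas]
    filter_upwards with u hu
    rw [Real.norm_eq_abs, abs_of_nonneg (by positivity)]
    have hexp : Real.exp (-(∑ k : Fin (n - 1),
          (u k ^ 2 / (2 * σ' k ^ 2) - μ' k * u k / σ' k ^ 2))
        - ((w / ∏ k, u k) ^ 2 / (2 * σn ^ 2) - μn * (w / ∏ k, u k) / σn ^ 2))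
        = Real.exp (-((w / ∏ k, u k) ^ 2 / (2 * σn ^ 2) - μn * (w / ∏ k, u k) / σn ^ 2)) *
          ∏ k, Real.exp (-(u k ^ 2 / (2 * σ' k ^ 2) - μ' k * u k / σ' k ^ 2)) := by
      rw [← Real.exp_sum, ← Real.exp_add]
      congr 1
      rw [← Finset.sum_neg_distrib]
      ring
    rw [hexp, ← mul_assoc]
    apply mul_le_mul_of_nonneg_right _ (Finset.prod_nonneg fun k _ => (Real.exp_pos _).le)
    exact bound_factor σn μn w _ (hσ _) hw hu
end
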